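/- arXiv:1209.2333 — 11 statements merged into one kernel-verified Lean document; each statement's English description precedes it below -/
import Mathlib

section
/- Let F be a field, n ≥ 1, and let S ⊆ ℕⁿ be a finite downward-closed set with |S| ≥ 2. Let T be the S × S matrix over F with (v,u) entry binom(v,u) (invertible, being unitriangular with respect to the coordinatewise order), and let T' := T⁻¹. Then the submatrix of T' with rows indexed by S* := S∖{0} and columns indexed by S is strongly full: for every u ∈ S, the square submatrix of T' with rows S* and columns S∖{u} is invertible. -/
open Finset Matrix

private lemma binom_det' {F : Type*} [Field F] {n : ℕ} (S : Finset (Fin n →₀ ℕ)) :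
    (Matrix.of fun v u : S =>
      (↑(∏ i : Fin n, ((v : Fin n →₀ ℕ) i).choose ((u : Fin n →₀ ℕ) i)) : F)).det = 1 := by
  haveI : Fintype (LinearExtension S) := (inferInstance : Fintype S)
  let eqv : (S : Type _) ≃ LinearExtension S := Equiv.refl _
  let M : Matrix S S F := Matrix.of fun v u : S =>
      (↑(∏ i : Fin n, ((v : Fin n →₀ ℕ) i).choose ((u : Fin n →₀ ℕ) i)) : F)
  let M' : Matrix (LinearExtension S) (LinearExtension S) F := Matrix.reindex eqv eqv M
  have htri : M'.BlockTriangular OrderDual.toDual := by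
    intro i j hij
    simp only [OrderDual.toDual_lt_toDual] at hij
    have hnle : ¬ ((eqv.symm j : Fin n →₀ ℕ) ≤ (eqv.symm i : Fin n →₀ ℕ)) := by
      intro hle
      have h2 : (eqv.symm j : S) ≤ eqv.symm i := hle
      have : (toLinearExtension (α := S)) (eqv.symm j) ≤ (toLinearExtension (α := S)) (eqv.symm i) :=
        toLinearExtension.monotone h2
      exact absurd this (not_le_of_gt hij)
    obtain ⟨k, hk⟩ : ∃ k, ((eqv.symm i : S) : Fin n →₀ ℕ) k < ((eqv.symm j : S) : Fin n →₀ ℕ) k := by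
      by_contra h
      push_neg at h
      exact hnle (Finsupp.le_def.mpr h)
    show ((∏ i' : Fin n, (((eqv.symm i : S) : Fin n →₀ ℕ) i').choose
        (((eqv.symm j : S) : Fin n →₀ ℕ) i') : ℕ) : F) = 0
    rw [Finset.prod_eq_zero (Finset.mem_univ k) (Nat.choose_eq_zero_of_lt hk)]
    simp
  have h1 := Matrix.det_of_lowerTriangular M' htri
  rw [show M' = Matrix.reindex eqv eqv M from rfl, Matrix.det_reindex_self] at h1
  rw [show (Matrix.of fun v u : S =>
      (↑(∏ i : Fin n, ((v : Fin n →₀ ℕ) i).choose ((u : Fin n →₀ ℕ) i)) : F)) = M from rfl, h1]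
  apply Finset.prod_eq_one
  intro i _
  show ((∏ i' : Fin n, (((eqv.symm i : S) : Fin n →₀ ℕ) i').choose
      (((eqv.symm i : S) : Fin n →₀ ℕ) i') : ℕ) : F) = 1
  simp

/-- **The inverse transfer matrix is strongly full.** Let `S ⊆ ℕⁿ` be a finite
downward-closed set with `|S| ≥ 2`, `T` the `S × S` binomial matrix over a field `F`,
and `T' := T⁻¹`.  Then for every `u ∈ S`, the square submatrix of `T'` with rows
`S* = S \ {0}` and columns `S \ {u}` is invertible (for any identification of the two
index sets, i.e. its determinant is nonzero). -/
theorem inverse_transfer_stronglyFull {F : Type*} [Field F] (n : ℕ) (hn : 1 ≤ n)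
    (S : Finset (Fin n →₀ ℕ))
    (hdc : ∀ e ∈ S, ∀ e' : Fin n →₀ ℕ, e' ≤ e → e' ∈ S)
    (hcard : 2 ≤ S.card)
    (T : Matrix S S F)
    (hT : T = Matrix.of fun v u : S =>
      (↑(∏ i : Fin n, ((v : Fin n →₀ ℕ) i).choose ((u : Fin n →₀ ℕ) i)) : F)) :
    ∀ u ∈ S, ∀ e : (S.erase u) ≃ (S.erase (0 : Fin n →₀ ℕ)),
      (Matrix.of fun v w : (S.erase (0 : Fin n →₀ ℕ)) =>
        T⁻¹ ⟨v.1, Finset.mem_of_mem_erase v.2⟩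
            ⟨(e.symm w).1, Finset.mem_of_mem_erase (e.symm w).2⟩).det ≠ 0 := by
  classical
  intro u hu e
  have h0S : (0 : Fin n →₀ ℕ) ∈ S := by
    obtain ⟨a, ha⟩ := Finset.card_pos.mp (by omega : 0 < S.card)
    exact hdc a ha 0 (by simp [Finsupp.le_def])
  have hdet1 : T.det = 1 := by rw [hT]; exact binom_det' S
  have hunit : IsUnit T.det := by rw [hdet1]; exact isUnit_one
  have hTT : T * T⁻¹ = 1 := Matrix.mul_nonsing_inv _ hunit
  intro hdet0
  obtain ⟨x, hx0, hxz⟩ := Matrix.exists_mulVec_eq_zero_iff.mpr hdet0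
  set su : {x // x ∈ S} := ⟨u, hu⟩ with hsu
  set s0 : {x // x ∈ S} := ⟨0, h0S⟩ with hs0
  set y : S → F := fun s => if h : s.1 ∈ S.erase u then x (e ⟨s.1, h⟩) else 0 with hy
  set z : S → F := T⁻¹ *ᵥ y with hz
  have hyu : y su = 0 := by
    rw [hy]; exact dif_neg (by simp [hsu])
  have hzv : ∀ v : S, v ≠ s0 → z v = 0 := by
    intro v hv
    have hv0 : v.1 ≠ (0 : Fin n →₀ ℕ) := fun h => hv (Subtype.ext h)
    have hvmem : v.1 ∈ S.erase (0 : Fin n →₀ ℕ) := Finset.mem_erase.mpr ⟨hv0, v.2⟩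
    have hrow := congrFun hxz ⟨v.1, hvmem⟩
    simp only [Matrix.mulVec, dotProduct, Matrix.of_apply, Pi.zero_apply] at hrow
    rw [hz]
    show (∑ s : S, T⁻¹ v s * y s) = 0
    rw [← Finset.sum_erase_add _ _ (Finset.mem_univ su), hyu, mul_zero, add_zero, ← hrow]
    refine Finset.sum_bij' (fun s hs => e ⟨s.1, Finset.mem_erase.mpr
        ⟨fun h => (Finset.mem_erase.mp hs).1 (Subtype.ext h), s.2⟩⟩)
      (fun w _ => ⟨(e.symm w).1, Finset.mem_of_mem_erase (e.symm w).2⟩)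
      (fun s hs => Finset.mem_univ _) ?_ ?_ ?_ ?_
    · intro w hw
      refine Finset.mem_erase.mpr ⟨?_, Finset.mem_univ _⟩
      intro hcon
      have : (e.symm w).1 = u := congrArg Subtype.val hcon
      exact (Finset.mem_erase.mp (e.symm w).2).1 this
    · intro s hs
      apply Subtype.ext
      simp
    · intro w hw
      simp
    · intro s hs
      have hmem : s.1 ∈ S.erase u := Finset.mem_erase.mpr
        ⟨fun h => (Finset.mem_erase.mp hs).1 (Subtype.ext h), s.2⟩
      have hys : y s = x (e ⟨s.1, hmem⟩) := by rw [hy]; exact dif_pos hmem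
      rw [hys]
      simp only [Equiv.symm_apply_apply]
  have hy_eq : ∀ s : S, y s = z s0 := by
    intro s
    have hTz : T *ᵥ z = y := by rw [hz, Matrix.mulVec_mulVec, hTT, Matrix.one_mulVec]
    have h := congrFun hTz s
    simp only [Matrix.mulVec, dotProduct] at h
    rw [← h]
    rw [Finset.sum_eq_single s0]
    · rw [hT]
      simp [hs0]
    · intro t _ ht; rw [hzv t ht, mul_zero]
    · intro h; exact absurd (Finset.mem_univ s0) h
  have hz0 : z s0 = 0 := by rw [← hy_eq su, hyu]
  apply hx0
  funext w
  show x w = 0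
  have hw := hy_eq ⟨(e.symm w).1, Finset.mem_of_mem_erase (e.symm w).2⟩
  rw [hz0] at hw
  rw [← hw, hy]
  have hc : ((⟨(e.symm w).1, Finset.mem_of_mem_erase (e.symm w).2⟩ :
      {x // x ∈ S}) : Fin n →₀ ℕ) ∈ S.erase u := (e.symm w).2
  dsimp only
  rw [dif_pos hc]
  exact (congrArg x (e.apply_symm_apply w)).symm
end

section
/- Let F be a field, κ ≥ 1, n ≥ 1, and let f be a nonconstant polynomial in x₁,…,x_n with coefficients in H_κ(F) such that every coordinate of f is a nonzero polynomial in F[x₁,…,x_n]. Let S := 𝒮(f) be the cone of f (a finite downward-closed set containing 0, with S* := S∖{0} nonempty) and let K := F(t₁,…,t_n) be the field of rational functions over F. Let f(t) ∈ H_κ(K) be the evaluation x_j ↦ t_j (a unit), and set f'(x) := f(t)^{−1} ⋆ f(x₁+t₁,…,x_n+t_n), a polynomial over H_κ(K). Define matrices over K: Z with rows indexed by {1,…,κ} and columns by S, whose v-th column is Coef(v)(f); Z'_{S*} with rows {1,…,κ} and columns S*, whose u-th column is Coef(u)(f'); for C ⊆ S, the diagonal matrix N_C with (u,u) entry t^u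 := ∏ t_i^{u_i}; T the S × S matrix with (v,u) entry binom(v,u), and T' := T⁻¹. Then every column of the matrix f(t)^{−1} ⋆ Z − Z'_{S*} · N_{S*} · T'_{S*,S} · N_S^{−1} is a K-scalar multiple of the all-ones vector in K^κ, where f(t)^{−1} ⋆ Z denotes the matrix obtained from Z by multiplying its i-th row by the i-th coordinate of f(t)^{−1}, and T'_{S*,S} is the submatrix of T' with rows S* and columns S. -/
noncomputable section

open MvPolynomial

/-- The canonical embedding of `F[t₁,…,t_n]` into the rational function field
`K = F(t₁,…,t_n)`. -/
def iK (F : Type*) [Field F] (n : ℕ) :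
    MvPolynomial (Fin n) F →+* FractionRing (MvPolynomial (Fin n) F) :=
  algebraMap _ _

/-- For `f` a polynomial over the Hadamard algebra `H_κ(F)`, the element
`f(t) ∈ H_κ(K)`: its `c`-th coordinate is the `c`-th coordinate polynomial of `f`,
with `x_j` renamed `t_j`, viewed in `K = F(t₁,…,t_n)`. -/
def hadamardEvalT (F : Type*) [Field F] (κ n : ℕ)
    (f : MvPolynomial (Fin n) (Fin κ → F)) :
    Fin κ → FractionRing (MvPolynomial (Fin n) F) :=
  fun c => iK F n (MvPolynomial.map (Pi.evalRingHom (fun _ => F) c) f)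

/-- The coordinatewise embedding `H_κ(F) →+* H_κ(K)`. -/
def hadamardEmbed (F : Type*) [Field F] (κ n : ℕ) :
    (Fin κ → F) →+* (Fin κ → FractionRing (MvPolynomial (Fin n) F)) :=
  Pi.ringHom fun c => ((iK F n).comp MvPolynomial.C).comp (Pi.evalRingHom (fun _ => F) c)

/-- The shifted polynomial `f(x+t)`, a polynomial in `x₁,…,x_n` over `H_κ(K)`. -/
def shiftPoly (F : Type*) [Field F] (κ n : ℕ)
    (f : MvPolynomial (Fin n) (Fin κ → F)) :
    MvPolynomial (Fin n) (Fin κ → FractionRing (MvPolynomial (Fin n) F)) :=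
  MvPolynomial.eval₂ (MvPolynomial.C.comp (hadamardEmbed F κ n))
    (fun j => MvPolynomial.X j + MvPolynomial.C (fun _ => iK F n (MvPolynomial.X j))) f

/-- The shifted-and-normalized polynomial `f'(x) = f(t)⁻¹ ⋆ f(x+t)` over `H_κ(K)`. -/
def shiftNormalize (F : Type*) [Field F] (κ n : ℕ)
    (f : MvPolynomial (Fin n) (Fin κ → F)) :
    MvPolynomial (Fin n) (Fin κ → FractionRing (MvPolynomial (Fin n) F)) :=
  MvPolynomial.C (fun c => (hadamardEvalT F κ n f c)⁻¹) * shiftPoly F κ n f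

/-! ### Auxiliary lemmas -/

lemma prod_monomial_eq {σ R ι : Type*} [CommSemiring R] (s : Finset ι) (d : ι → σ →₀ ℕ)
    (c : ι → R) :
    (∏ i ∈ s, MvPolynomial.monomial (d i) (c i)) =
      MvPolynomial.monomial (∑ i ∈ s, d i) (∏ i ∈ s, c i) := by
  classical
  induction s using Finset.induction with
  | empty => simp
  | insert _ _ h ih =>
      rw [Finset.prod_insert h, Finset.prod_insert h, Finset.sum_insert h, ih,
        MvPolynomial.monomial_mul]

lemma pow_X_add_C {σ R : Type*} [CommSemiring R] [DecidableEq σ] (j : σ) (a : R) (m : ℕ) :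
    (MvPolynomial.X j + MvPolynomial.C a : MvPolynomial σ R) ^ m =
      ∑ k ∈ Finset.range (m+1), MvPolynomial.monomial (Finsupp.single j k)
        ((m.choose k : R) * a ^ (m - k)) := by
  rw [add_pow]
  refine Finset.sum_congr rfl fun k hk => ?_
  rw [X_pow_eq_monomial, ← C_pow, ← C_eq_coe_nat]
  rw [mul_assoc, ← C_mul, C_apply, MvPolynomial.monomial_mul]
  simp [mul_comm]

lemma coeff_prod_X_add_C {K : Type*} [CommSemiring K] {n : ℕ} (τ : Fin n → K) (v w : Fin n →₀ ℕ) :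
    MvPolynomial.coeff w (∏ j : Fin n, (MvPolynomial.X j + MvPolynomial.C (τ j)) ^ v j) =
      ∏ j : Fin n, (((v j).choose (w j) : K) * τ j ^ (v j - w j)) := by
  classical
  have hx : ∀ (x : Fin n → ℕ) (a : Fin n), (∑ j, Finsupp.single j (x j)) a = x a := by
    intro x a
    rw [Finsupp.finset_sum_apply]
    simp [Finsupp.single_apply]
  have h1 : (∏ j : Fin n, (X j + C (τ j) : MvPolynomial (Fin n) K) ^ v j)
      = ∑ x ∈ Fintype.piFinset (fun j => Finset.range (v j + 1)),
          monomial (∑ j, Finsupp.single j (x j))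
            (∏ j, (((v j).choose (x j) : K) * τ j ^ (v j - x j))) := by
    simp_rw [pow_X_add_C]
    rw [Finset.prod_univ_sum]
    exact Finset.sum_congr rfl fun x _ => prod_monomial_eq _ _ _
  rw [h1]
  rw [MvPolynomial.coeff_sum]
  have hcond : ∀ x : Fin n → ℕ, ((∑ j, Finsupp.single j (x j)) = w) ↔ x = ⇑w := by
    intro x
    rw [Finsupp.ext_iff, funext_iff]
    constructor
    · intro h a; rw [← hx x a, h a]
    · intro h a; rw [hx x a, h a]
  have h2 : ∀ x ∈ Fintype.piFinset (fun j => Finset.range (v j + 1)),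
      MvPolynomial.coeff w (monomial (∑ j, Finsupp.single j (x j))
        (∏ j, (((v j).choose (x j) : K) * τ j ^ (v j - x j))))
      = if x = ⇑w then (∏ j, (((v j).choose (x j) : K) * τ j ^ (v j - x j))) else 0 := by
    intro x _
    rw [MvPolynomial.coeff_monomial, if_congr (hcond x) rfl rfl]
  rw [Finset.sum_congr rfl h2, Finset.sum_ite_eq' _ (⇑w)]
  split_ifs with h
  · rfl
  · symm
    rw [Fintype.mem_piFinset] at h
    push_neg at h
    obtain ⟨j, hj⟩ := h
    rw [Finset.mem_range] at hj
    refine Finset.prod_eq_zero (Finset.mem_univ j) ?_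
    have : (v j).choose (w j) = 0 := Nat.choose_eq_zero_of_lt (by omega)
    simp [this]

lemma det_one_of_triangular {K ι α : Type*} [CommRing K] [Fintype ι] [DecidableEq ι]
    [PartialOrder α] (g : ι → α) (hg : Function.Injective g) (M : Matrix ι ι K)
    (h0 : ∀ i j, ¬ g j ≤ g i → M i j = 0) (h1 : ∀ i, M i i = 1) : M.det = 1 := by
  letI : LinearOrder ι :=
    LinearOrder.lift' (fun i => toLinearExtension (g i)) (fun a b h => hg (by exact h))
  rw [Matrix.det_of_lowerTriangular M (fun i j hij => ?_)]
  · exact Finset.prod_eq_one fun i _ => h1 i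
  · refine h0 i j fun hle => ?_
    have h2 : toLinearExtension (g j) ≤ toLinearExtension (g i) := toLinearExtension.monotone hle
    have h3 : toLinearExtension (g i) < toLinearExtension (g j) := hij
    exact absurd h2 (not_le_of_gt h3)

lemma coeff_shiftPoly {F : Type*} [Field F] (κ n : ℕ) (f : MvPolynomial (Fin n) (Fin κ → F))
    (w : Fin n →₀ ℕ) (i : Fin κ) :
    MvPolynomial.coeff w (shiftPoly F κ n f) i =
      ∑ v ∈ f.support, iK F n (MvPolynomial.C (MvPolynomial.coeff v f i)) *
        ∏ j, (((v j).choose (w j) : FractionRing (MvPolynomial (Fin n) F)) *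
          iK F n (MvPolynomial.X j) ^ (v j - w j)) := by
  have hH : MvPolynomial.coeff w (shiftPoly F κ n f) =
      ∑ v ∈ f.support, hadamardEmbed F κ n (MvPolynomial.coeff v f) *
        ∏ j, (((v j).choose (w j) : Fin κ → FractionRing (MvPolynomial (Fin n) F)) *
          (fun _ => iK F n (MvPolynomial.X j)) ^ (v j - w j)) := by
    rw [shiftPoly, MvPolynomial.eval₂_eq']
    rw [MvPolynomial.coeff_sum]
    refine Finset.sum_congr rfl fun v _ => ?_
    rw [RingHom.comp_apply, MvPolynomial.coeff_C_mul, coeff_prod_X_add_C]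
  rw [hH]
  rw [Finset.sum_apply]
  refine Finset.sum_congr rfl fun v _ => ?_
  rw [Pi.mul_apply, Finset.prod_apply]
  rfl

lemma hadamardEvalT_eq {F : Type*} [Field F] (κ n : ℕ) (f : MvPolynomial (Fin n) (Fin κ → F))
    (i : Fin κ) :
    hadamardEvalT F κ n f i =
      ∑ v ∈ f.support, iK F n (MvPolynomial.C (MvPolynomial.coeff v f i)) *
        ∏ j, iK F n (MvPolynomial.X j) ^ (v j) := by
  have h1 : MvPolynomial.map (Pi.evalRingHom (fun _ => F) i) f =
      ∑ v ∈ f.support, MvPolynomial.C (MvPolynomial.coeff v f i) *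
        ∏ j, (MvPolynomial.X j : MvPolynomial (Fin n) F) ^ (v j) := by
    rw [MvPolynomial.map_eq_eval₂Hom_C_comp, MvPolynomial.coe_eval₂Hom]
    rw [MvPolynomial.eval₂_eq']
    rfl
  rw [hadamardEvalT, h1, map_sum]
  refine Finset.sum_congr rfl fun v _ => ?_
  rw [map_mul, map_prod]
  simp [map_pow]

lemma iK_monomial {F : Type*} [Field F] {n : ℕ} (u : Fin n →₀ ℕ) :
    iK F n (MvPolynomial.monomial u (1 : F)) = ∏ j, iK F n (MvPolynomial.X j) ^ (u j) := by
  rw [MvPolynomial.monic_monomial_eq, Finsupp.prod_pow, map_prod]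
  exact Finset.prod_congr rfl fun j _ => (map_pow _ _ _)

lemma term_eq {F : Type*} [Field F] {n : ℕ} (v w : Fin n →₀ ℕ) :
    (∏ j, (((v j).choose (w j) : FractionRing (MvPolynomial (Fin n) F)) *
        iK F n (MvPolynomial.X j) ^ (v j - w j))) * iK F n (MvPolynomial.monomial w (1:F))
      = iK F n (MvPolynomial.monomial v (1:F)) *
          (↑(∏ j, (v j).choose (w j)) : FractionRing (MvPolynomial (Fin n) F)) := by
  rw [iK_monomial, iK_monomial, Nat.cast_prod, ← Finset.prod_mul_distrib,
    ← Finset.prod_mul_distrib]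
  refine Finset.prod_congr rfl fun j _ => ?_
  rcases le_or_gt (w j) (v j) with h | h
  · rw [mul_assoc, ← pow_add, Nat.sub_add_cancel h]; ring
  · rw [Nat.choose_eq_zero_of_lt h]; simp

lemma shift_coeff_sum {F : Type*} [Field F] (κ n : ℕ) (f : MvPolynomial (Fin n) (Fin κ → F))
    (S : Finset (Fin n →₀ ℕ)) (hsupp : f.support ⊆ S) (i : Fin κ) (w : Fin n →₀ ℕ) :
    MvPolynomial.coeff w (shiftPoly F κ n f) i * iK F n (MvPolynomial.monomial w (1:F)) =
      ∑ v ∈ S, iK F n (MvPolynomial.C (MvPolynomial.coeff v f i)) *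
        iK F n (MvPolynomial.monomial v (1:F)) *
        (↑(∏ j, (v j).choose (w j)) : FractionRing (MvPolynomial (Fin n) F)) := by
  rw [coeff_shiftPoly, Finset.sum_mul]
  rw [← Finset.sum_subset hsupp (fun v _ hv => by
    rw [MvPolynomial.notMem_support_iff.mp hv]
    simp)]
  refine Finset.sum_congr rfl fun v _ => ?_
  rw [mul_assoc, term_eq, ← mul_assoc]

lemma coeff_zero_shiftPoly {F : Type*} [Field F] (κ n : ℕ)
    (f : MvPolynomial (Fin n) (Fin κ → F)) (i : Fin κ) :
    MvPolynomial.coeff 0 (shiftPoly F κ n f) i = hadamardEvalT F κ n f i := by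
  rw [coeff_shiftPoly, hadamardEvalT_eq]
  refine Finset.sum_congr rfl fun v _ => ?_
  congr 1
  refine Finset.prod_congr rfl fun j _ => ?_
  simp

lemma hadamardEvalT_ne_zero {F : Type*} [Field F] (κ n : ℕ)
    (f : MvPolynomial (Fin n) (Fin κ → F))
    (hcoord : ∀ c : Fin κ, MvPolynomial.map (Pi.evalRingHom (fun _ => F) c) f ≠ 0)
    (i : Fin κ) : hadamardEvalT F κ n f i ≠ 0 := by
  intro h
  apply hcoord i
  have hinj := IsFractionRing.injective (MvPolynomial (Fin n) F)
    (FractionRing (MvPolynomial (Fin n) F))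
  apply hinj
  rw [map_zero]
  exact h

lemma coeff_shiftNormalize {F : Type*} [Field F] (κ n : ℕ)
    (f : MvPolynomial (Fin n) (Fin κ → F)) (w : Fin n →₀ ℕ) (i : Fin κ) :
    MvPolynomial.coeff w (shiftNormalize F κ n f) i =
      (hadamardEvalT F κ n f i)⁻¹ * MvPolynomial.coeff w (shiftPoly F κ n f) i := by
  rw [shiftNormalize, MvPolynomial.coeff_C_mul]
  rfl

lemma coeff_zero_shiftNormalize {F : Type*} [Field F] (κ n : ℕ)
    (f : MvPolynomial (Fin n) (Fin κ → F))
    (hcoord : ∀ c : Fin κ, MvPolynomial.map (Pi.evalRingHom (fun _ => F) c) f ≠ 0)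
    (i : Fin κ) : MvPolynomial.coeff 0 (shiftNormalize F κ n f) i = 1 := by
  rw [coeff_shiftNormalize, coeff_zero_shiftPoly,
    inv_mul_cancel₀ (hadamardEvalT_ne_zero κ n f hcoord i)]

lemma iK_monomial_ne_zero {F : Type*} [Field F] {n : ℕ} (u : Fin n →₀ ℕ) :
    iK F n (MvPolynomial.monomial u (1 : F)) ≠ 0 := by
  intro h
  have hinj := IsFractionRing.injective (MvPolynomial (Fin n) F)
    (FractionRing (MvPolynomial (Fin n) F))
  have h0 : MvPolynomial.monomial u (1 : F) = 0 := by
    apply hinj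
    rw [map_zero]
    exact h
  rw [MvPolynomial.monomial_eq_zero] at h0
  exact one_ne_zero h0

set_option maxHeartbeats 2000000 in
/-- **Transfer equation, mod the all-ones vector.**  With `S := 𝒮(f)` the cone of a
nonconstant `f` over `H_κ(F)` all of whose coordinates are nonzero, `Z` the `κ × S`
matrix of coefficients of `f`, `Z'_{S*}` the `κ × S*` matrix of coefficients of the
shifted-and-normalized `f'`, `N_C` the diagonal matrices with entries `t^u`, and
`T' := T⁻¹` the inverse binomial transfer matrix, every column of
`f(t)⁻¹ ⋆ Z − Z'_{S*} · N_{S*} · T'_{S*,S} · N_S⁻¹` is a `K`-scalar multiple of the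
all-ones vector of `K^κ`. -/
theorem transfer_equation_mod {F : Type*} [Field F] (κ n : ℕ) (hκ : 1 ≤ κ) (hn : 1 ≤ n)
    (f : MvPolynomial (Fin n) (Fin κ → F))
    (hnonconst : ∃ e ∈ f.support, e ≠ 0)
    (hcoord : ∀ c : Fin κ, MvPolynomial.map (Pi.evalRingHom (fun _ => F) c) f ≠ 0)
    (S : Finset (Fin n →₀ ℕ))
    (hS : ∀ e : Fin n →₀ ℕ, e ∈ S ↔ ∃ v ∈ f.support, e ≤ v) :
    ∀ v : S, ∃ cst : FractionRing (MvPolynomial (Fin n) F), ∀ i : Fin κ,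
      ((Matrix.of fun (i : Fin κ) (v : S) =>
          (hadamardEvalT F κ n f i)⁻¹ * iK F n (MvPolynomial.C (MvPolynomial.coeff v.1 f i))) -
        (Matrix.of fun (i : Fin κ) (u : (S.erase (0 : Fin n →₀ ℕ))) =>
            MvPolynomial.coeff u.1 (shiftNormalize F κ n f) i) *
          Matrix.diagonal (fun u : (S.erase (0 : Fin n →₀ ℕ)) =>
            iK F n (MvPolynomial.monomial u.1 (1 : F))) *
          ((Matrix.of fun v u : S =>
            (↑(∏ j : Fin n, ((v : Fin n →₀ ℕ) j).choose ((u : Fin n →₀ ℕ) j)) :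
              FractionRing (MvPolynomial (Fin n) F)))⁻¹).submatrix
            (fun u : (S.erase (0 : Fin n →₀ ℕ)) =>
              (⟨u.1, Finset.mem_of_mem_erase u.2⟩ : S)) id *
          (Matrix.diagonal (fun u : S => iK F n (MvPolynomial.monomial u.1 (1 : F))))⁻¹) i v
        = cst := by
  intro v
  have h0S : (0 : Fin n →₀ ℕ) ∈ S := by
    obtain ⟨e, he, _⟩ := hnonconst
    exact (hS 0).mpr ⟨e, he, zero_le⟩
  have hsupp : f.support ⊆ S := fun u hu => (hS u).mpr ⟨u, hu, le_refl u⟩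
  set Z : Matrix (Fin κ) S (FractionRing (MvPolynomial (Fin n) F)) :=
    Matrix.of fun (i : Fin κ) (v : S) =>
      (hadamardEvalT F κ n f i)⁻¹ * iK F n (MvPolynomial.C (MvPolynomial.coeff v.1 f i))
    with hZ
  set B : Matrix (Fin κ) (S.erase (0 : Fin n →₀ ℕ)) (FractionRing (MvPolynomial (Fin n) F)) :=
    Matrix.of fun (i : Fin κ) (u : (S.erase (0 : Fin n →₀ ℕ))) =>
      MvPolynomial.coeff u.1 (shiftNormalize F κ n f) i with hB
  set Nk := Matrix.diagonal (fun u : (S.erase (0 : Fin n →₀ ℕ)) =>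
    iK F n (MvPolynomial.monomial u.1 (1 : F))) with hNk
  set T := Matrix.of fun v u : S =>
    (↑(∏ j : Fin n, ((v : Fin n →₀ ℕ) j).choose ((u : Fin n →₀ ℕ) j)) :
      FractionRing (MvPolynomial (Fin n) F)) with hT
  set NS := Matrix.diagonal (fun u : S => iK F n (MvPolynomial.monomial u.1 (1 : F))) with hNS
  set emb : (S.erase (0 : Fin n →₀ ℕ)) → S :=
    (fun u : (S.erase (0 : Fin n →₀ ℕ)) => (⟨u.1, Finset.mem_of_mem_erase u.2⟩ : S)) with hemb
  refine ⟨T⁻¹ ⟨0, h0S⟩ v * (iK F n (MvPolynomial.monomial v.1 (1:F)))⁻¹, fun i => ?_⟩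
  -- determinants
  have hTdet : IsUnit T.det := by
    have hdet : T.det = 1 := by
      refine det_one_of_triangular (fun u : S => u.1) Subtype.val_injective T ?_ ?_
      · intro a b hab
        rw [Finsupp.le_def] at hab
        push_neg at hab
        obtain ⟨j, hj⟩ := hab
        have h2 : (∏ j, (a.1 j).choose (b.1 j)) = 0 :=
          Finset.prod_eq_zero (Finset.mem_univ j) (Nat.choose_eq_zero_of_lt hj)
        show ((∏ j : Fin n, (a.1 j).choose (b.1 j) : ℕ) :
          FractionRing (MvPolynomial (Fin n) F)) = 0
        rw [h2, Nat.cast_zero]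
      · intro a
        show ((∏ j : Fin n, (a.1 j).choose (a.1 j) : ℕ) :
          FractionRing (MvPolynomial (Fin n) F)) = 1
        simp [Nat.choose_self]
    rw [hdet]; exact isUnit_one
  have hNdet : IsUnit NS.det := by
    rw [hNS, Matrix.det_diagonal]
    exact (Finset.prod_ne_zero_iff.mpr fun u _ => iK_monomial_ne_zero u.1).isUnit
  -- main identity
  set BS : Matrix (Fin κ) S (FractionRing (MvPolynomial (Fin n) F)) :=
    Matrix.of fun (i : Fin κ) (w : S) =>
      MvPolynomial.coeff w.1 (shiftNormalize F κ n f) i with hBS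
  have hmain : Z * NS * T = BS * NS := by
    ext i' w
    rw [Matrix.mul_apply]
    simp only [hNS, Matrix.mul_diagonal, hZ, hT, hBS, Matrix.of_apply]
    rw [coeff_shiftNormalize, mul_assoc, shift_coeff_sum κ n f S hsupp i' w.1,
      Finset.mul_sum]
    rw [← Finset.sum_coe_sort S (fun x => (hadamardEvalT F κ n f i')⁻¹ *
      (iK F n (MvPolynomial.C (MvPolynomial.coeff x f i')) *
        iK F n (MvPolynomial.monomial x (1:F)) *
        (↑(∏ j, (x j).choose (w.1 j)) : FractionRing (MvPolynomial (Fin n) F))))]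
    refine Finset.sum_congr rfl fun x _ => by ring
  have hZeq : Z = BS * NS * T⁻¹ * NS⁻¹ := by
    have h1 : Z * NS * T * T⁻¹ = BS * NS * T⁻¹ := by rw [hmain]
    rw [Matrix.mul_nonsing_inv_cancel_right _ _ hTdet] at h1
    calc Z = Z * NS * NS⁻¹ := (Matrix.mul_nonsing_inv_cancel_right _ _ hNdet).symm
      _ = BS * NS * T⁻¹ * NS⁻¹ := by rw [h1]
  have hNSinv : NS⁻¹ = Matrix.diagonal
      (fun u : S => (iK F n (MvPolynomial.monomial u.1 (1:F)))⁻¹) := by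
    refine Matrix.inv_eq_right_inv ?_
    rw [hNS, Matrix.diagonal_mul_diagonal]
    rw [show (fun u : S => iK F n (MvPolynomial.monomial u.1 (1:F)) *
        (iK F n (MvPolynomial.monomial u.1 (1:F)))⁻¹) =
        (fun _ : S => (1 : FractionRing (MvPolynomial (Fin n) F))) from
      funext fun u => mul_inv_cancel₀ (iK_monomial_ne_zero u.1)]
    exact Matrix.diagonal_one
  set G : S → FractionRing (MvPolynomial (Fin n) F) := fun u =>
    MvPolynomial.coeff u.1 (shiftNormalize F κ n f) i *
      iK F n (MvPolynomial.monomial u.1 (1:F)) * T⁻¹ u v *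
      (iK F n (MvPolynomial.monomial v.1 (1:F)))⁻¹ with hG
  have hZentry : Z i v = ∑ u : S, G u := by
    rw [hZeq, hNSinv, Matrix.mul_diagonal, Matrix.mul_apply, Finset.sum_mul]
    refine Finset.sum_congr rfl fun u _ => ?_
    simp only [hNS, Matrix.mul_diagonal, hBS, Matrix.of_apply, hG]
  have hPentry : (B * Nk * (T⁻¹).submatrix emb id * NS⁻¹) i v
      = ∑ u : (S.erase (0 : Fin n →₀ ℕ)), G (emb u) := by
    rw [hNSinv, Matrix.mul_diagonal, Matrix.mul_apply, Finset.sum_mul]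
    refine Finset.sum_congr rfl fun u _ => ?_
    simp only [hNk, Matrix.mul_diagonal, hB, Matrix.of_apply, Matrix.submatrix_apply, id_eq,
      hG, hemb]
  have hsplit : ∑ u : S, G u = G ⟨0, h0S⟩ + ∑ u : (S.erase (0 : Fin n →₀ ℕ)), G (emb u) := by
    rw [← Finset.add_sum_erase _ G (Finset.mem_univ ⟨0, h0S⟩)]
    congr 1
    refine Finset.sum_bij'
      (i := fun (u : S) (hu : u ∈ Finset.univ.erase ⟨0, h0S⟩) =>
        (⟨u.1, Finset.mem_erase.mpr
          ⟨fun h => (Finset.mem_erase.mp hu).1 (Subtype.ext h), u.2⟩⟩ :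
          (S.erase (0 : Fin n →₀ ℕ))))
      (j := fun u _ => emb u) ?_ ?_ ?_ ?_ ?_
    · intro a ha; exact Finset.mem_univ _
    · intro a _
      exact Finset.mem_erase.mpr
        ⟨fun h => (Finset.mem_erase.mp a.2).1 (congrArg Subtype.val h), Finset.mem_univ _⟩
    · intro a ha; rfl
    · intro a ha; rfl
    · intro a ha; rfl
  have hGz : G ⟨0, h0S⟩ = T⁻¹ ⟨0, h0S⟩ v * (iK F n (MvPolynomial.monomial v.1 (1:F)))⁻¹ := by
    rw [hG]
    show MvPolynomial.coeff 0 (shiftNormalize F κ n f) i *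
      iK F n (MvPolynomial.monomial 0 (1:F)) * T⁻¹ ⟨0, h0S⟩ v *
      (iK F n (MvPolynomial.monomial v.1 (1:F)))⁻¹ = _
    rw [coeff_zero_shiftNormalize κ n f hcoord i]
    rw [show MvPolynomial.monomial (0 : Fin n →₀ ℕ) (1:F) = 1 by
      rw [MvPolynomial.monomial_zero', MvPolynomial.C_1]]
    rw [map_one]
    ring
  rw [Matrix.sub_apply, hZentry, hPentry, hsplit, hGz]
  ring
end
end

section
/- Let F be a field, κ ≥ 1, and ℓ ≥ 2⌈log₂ κ⌉ + 1. For each i ∈ {1,…,ℓ}, let U_i and W_i be finite sets with U_i nonempty and |W_i| = |U_i| + 1, and let T_i be a strongly full matrix over F with rows indexed by U_i and columns by W_i. Let T := ⊗_{i=1}^ℓ T_i be the Kronecker product, with rows indexed by U := ∏_i U_i and columns by W := ∏_i W_i. Then for every set M ⊆ W of 'marked' columns with |M| ≤ κ, there exists a set C ⊆ W ∖ M with |C| = |U| such that the square submatrix T_{U,C} (all rows, columns C) is invertible. -/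
/-- A matrix with one more column than rows is *strongly full* if deleting any single
column leaves an invertible square matrix (under any identification of the row index
set with the remaining columns). -/
def StronglyFull {F : Type*} [Field F] {I J : Type*} [Fintype I] [DecidableEq I]
    (M : Matrix I J F) : Prop :=
  ∀ u : J, ∀ e : I ≃ {w : J // w ≠ u}, IsUnit (M.submatrix id (fun i => (e i).1))

lemma two_support {F : Type*} [Field F] {I J : Type*} [Fintype I] [DecidableEq I]
    [Fintype J] [DecidableEq J]
    (hcard : Fintype.card J = Fintype.card I + 1)
    (T : Matrix I J F) (hT : StronglyFull T) (z : I → F) (hz : z ≠ 0) :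
    ∃ a b : J, a ≠ b ∧ (∑ u, z u * T u a) ≠ 0 ∧ (∑ u, z u * T u b) ≠ 0 := by
  classical
  have hzv : ∀ v : J, (∀ w : J, w ≠ v → (∑ u, z u * T u w) = 0) → False := by
    intro v hv
    have hc : Fintype.card I = Fintype.card {w : J // w ≠ v} := by
      have := Fintype.card_subtype_compl (fun w : J => w = v)
      simp only [Fintype.card_subtype_eq] at this
      have : Fintype.card {w : J // w ≠ v} = Fintype.card J - 1 := this
      omega
    let e : I ≃ {w : J // w ≠ v} := Fintype.equivOfCardEq hc
    have hu := hT v e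
    have hinj := Matrix.vecMul_injective_iff_isUnit.mpr hu
    have h0 : (T.submatrix id (fun i => (e i).1)).vecMul z
        = (T.submatrix id (fun i => (e i).1)).vecMul 0 := by
      funext j
      simp only [Matrix.vecMul, dotProduct, Matrix.submatrix_apply, id_eq,
        Matrix.zero_vecMul, Pi.zero_apply]
      rw [hv (e j).1 (e j).2]
      simp [Matrix.vecMul, dotProduct]
    exact hz (hinj h0)
  have hJ : Nonempty J := by
    have : 0 < Fintype.card J := by omega
    exact Fintype.card_pos_iff.mp this
  set s : Finset J := Finset.univ.filter (fun w => (∑ u, z u * T u w) ≠ 0) with hs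
  by_cases h2 : 2 ≤ s.card
  · obtain ⟨a, ha, b, hb, hab⟩ := Finset.one_lt_card.mp h2
    simp only [hs, Finset.mem_filter] at ha hb
    exact ⟨a, b, hab, ha.2, hb.2⟩
  · exfalso
    rcases s.eq_empty_or_nonempty with he | ⟨v, hv⟩
    · obtain ⟨v⟩ := hJ
      refine hzv v (fun w _ => ?_)
      by_contra hw
      have : w ∈ s := by simp [hs, hw]
      simp [he] at this
    · refine hzv v (fun w hwv => ?_)
      by_contra hw
      have hws : w ∈ s := by simp [hs, hw]
      have : 2 ≤ s.card := Finset.one_lt_card.mpr ⟨w, hws, v, hv, hwv⟩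
      omega

lemma key_support {F : Type*} [Field F] [DecidableEq F] (ℓ : ℕ) :
    ∀ (U : Fin ℓ → Type u) (W : Fin ℓ → Type v)
      [∀ i, Fintype (U i)] [∀ i, DecidableEq (U i)]
      [∀ i, Fintype (W i)] [∀ i, DecidableEq (W i)],
      (∀ i, Fintype.card (W i) = Fintype.card (U i) + 1) →
      ∀ (T : ∀ i, Matrix (U i) (W i) F), (∀ i, StronglyFull (T i)) →
      ∀ x : (∀ i, U i) → F, x ≠ 0 →
      2 ^ ℓ ≤ (Finset.univ.filter
        (fun w : ∀ i, W i => (∑ u, x u * ∏ i, T i (u i) (w i)) ≠ 0)).card := by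
  induction ℓ with
  | zero =>
    intro U W _ _ _ _ hcard T hT x hx
    haveI : Unique (∀ i : Fin 0, U i) := ⟨⟨fun i => i.elim0⟩, fun u => funext fun i => i.elim0⟩
    have hx0 : x default ≠ 0 := by
      intro h
      apply hx
      funext u
      rw [Subsingleton.elim u default, h]
      rfl
    have hmem : (fun i : Fin 0 => i.elim0) ∈ Finset.univ.filter
        (fun w : ∀ i : Fin 0, W i => (∑ u, x u * ∏ i, T i (u i) (w i)) ≠ 0) := by
      simp only [Finset.mem_filter, Finset.mem_univ, true_and]
      rw [Fintype.sum_unique]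
      simpa using hx0
    calc 2 ^ 0 = 1 := rfl
    _ ≤ _ := Finset.card_pos.mpr ⟨_, hmem⟩
  | succ n ih =>
    intro U W _ _ _ _ hcard T hT x hx
    set y : W 0 → (∀ i : Fin n, U i.succ) → F :=
      fun w₀ u' => ∑ u₀, T 0 u₀ w₀ * x (Fin.cons u₀ u') with hy
    -- the key sum decomposition
    have hsum : ∀ (w₀ : W 0) (w' : ∀ i : Fin n, W i.succ),
        (∑ u : ∀ i, U i, x u * ∏ i, T i (u i) (Fin.cons w₀ w' i))
          = ∑ u' : ∀ i : Fin n, U i.succ,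
              y w₀ u' * ∏ i : Fin n, T i.succ (u' i) (w' i) := by
      intro w₀ w'
      rw [← (Fin.consEquiv U).sum_comp]
      rw [Fintype.sum_prod_type]
      rw [Finset.sum_comm]
      refine Finset.sum_congr rfl (fun u' _ => ?_)
      simp only [hy, Finset.sum_mul]
      refine Finset.sum_congr rfl (fun u₀ _ => ?_)
      have : ∀ i : Fin (n+1), T i (Fin.consEquiv U (u₀, u') i) (Fin.cons w₀ w' i)
          = Fin.cons (α := fun _ => F) (T 0 u₀ w₀)
              (fun i : Fin n => T i.succ (u' i) (w' i)) i := by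
        intro i
        refine Fin.cases ?_ (fun j => ?_) i <;> simp [Fin.consEquiv]
      rw [Finset.prod_congr rfl (fun i _ => this i), Fin.prod_univ_succ]
      simp only [Fin.cons_zero, Fin.cons_succ, Fin.consEquiv, Equiv.coe_fn_mk]
      ring
    -- two good values of w₀
    obtain ⟨u, hu⟩ : ∃ u, x u ≠ 0 := by
      by_contra h; push_neg at h; exact hx (funext h)
    set z : U 0 → F := fun u₀ => x (Fin.cons u₀ (Fin.tail u)) with hz
    have hzne : z ≠ 0 := by
      intro h
      apply hu
      have := congr_fun h (u 0)
      simpa [hz, Fin.cons_self_tail] using this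
    obtain ⟨a, b, hab, ha, hb⟩ := two_support (hcard 0) (T 0) (hT 0) z hzne
    have hya : y a ≠ 0 := by
      intro h
      apply ha
      have := congr_fun h (Fin.tail u)
      simp only [hy, Pi.zero_apply] at this
      rw [← this]
      exact Finset.sum_congr rfl (fun u₀ _ => by rw [mul_comm])
    have hyb : y b ≠ 0 := by
      intro h
      apply hb
      have := congr_fun h (Fin.tail u)
      simp only [hy, Pi.zero_apply] at this
      rw [← this]
      exact Finset.sum_congr rfl (fun u₀ _ => by rw [mul_comm])
    -- inner supports
    set Sa := Finset.univ.filter (fun w' : ∀ i : Fin n, W i.succ =>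
      (∑ u', y a u' * ∏ i, T i.succ (u' i) (w' i)) ≠ 0) with hSa
    set Sb := Finset.univ.filter (fun w' : ∀ i : Fin n, W i.succ =>
      (∑ u', y b u' * ∏ i, T i.succ (u' i) (w' i)) ≠ 0) with hSb
    have hca : 2 ^ n ≤ Sa.card :=
      ih (fun i => U i.succ) (fun i => W i.succ) (fun i => hcard i.succ)
        (fun i => T i.succ) (fun i => hT i.succ) (y a) hya
    have hcb : 2 ^ n ≤ Sb.card :=
      ih (fun i => U i.succ) (fun i => W i.succ) (fun i => hcard i.succ)
        (fun i => T i.succ) (fun i => hT i.succ) (y b) hyb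
    set S := Finset.univ.filter
      (fun w : ∀ i : Fin (n+1), W i => (∑ u, x u * ∏ i, T i (u i) (w i)) ≠ 0) with hS
    have hconsinj : ∀ c : W 0, Function.Injective (fun w' : ∀ i : Fin n, W i.succ =>
        (Fin.cons c w' : ∀ i, W i)) := fun c w1 w2 h => by
      funext i
      have := congr_fun h i.succ
      simpa using this
    have hsubA : Sa.image (fun w' => (Fin.cons a w' : ∀ i, W i)) ⊆ S := by
      intro w hw
      obtain ⟨w', hw', rfl⟩ := Finset.mem_image.mp hw
      simp only [hS, Finset.mem_filter, Finset.mem_univ, true_and]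
      rw [hsum a w']
      simpa [hSa] using hw'
    have hsubB : Sb.image (fun w' => (Fin.cons b w' : ∀ i, W i)) ⊆ S := by
      intro w hw
      obtain ⟨w', hw', rfl⟩ := Finset.mem_image.mp hw
      simp only [hS, Finset.mem_filter, Finset.mem_univ, true_and]
      rw [hsum b w']
      simpa [hSb] using hw'
    have hdisj : Disjoint (Sa.image (fun w' => (Fin.cons a w' : ∀ i, W i)))
        (Sb.image (fun w' => (Fin.cons b w' : ∀ i, W i))) := by
      rw [Finset.disjoint_left]
      intro w hwa hwb
      obtain ⟨w1, _, rfl⟩ := Finset.mem_image.mp hwa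
      obtain ⟨w2, _, h⟩ := Finset.mem_image.mp hwb
      apply hab
      have := congr_fun h 0
      simpa using this.symm
    calc 2 ^ (n+1) = 2 ^ n + 2 ^ n := by ring
    _ ≤ Sa.card + Sb.card := Nat.add_le_add hca hcb
    _ = (Sa.image (fun w' => (Fin.cons a w' : ∀ i, W i))).card
        + (Sb.image (fun w' => (Fin.cons b w' : ∀ i, W i))).card := by
        rw [Finset.card_image_of_injective _ (hconsinj a),
          Finset.card_image_of_injective _ (hconsinj b)]
    _ = (Sa.image (fun w' => (Fin.cons a w' : ∀ i, W i))
        ∪ Sb.image (fun w' => (Fin.cons b w' : ∀ i, W i))).card :=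
        (Finset.card_union_of_disjoint hdisj).symm
    _ ≤ S.card := Finset.card_le_card (Finset.union_subset hsubA hsubB)

open Matrix

/-- **Invertible minor of a Kronecker product of strongly full matrices.**
If `ℓ ≥ 2⌈log₂ κ⌉ + 1` and each `T i` is strongly full with `|W i| = |U i| + 1`, then
for every set `M` of at most `κ` marked columns of `T = ⊗ᵢ T i` there is a set `C` of
unmarked columns, `|C| = |∏ᵢ U i|`, whose square submatrix (all rows, columns `C`)
is invertible. -/
theorem kronecker_invertible_minor {F : Type*} [Field F] (κ ℓ : ℕ) (hκ : 1 ≤ κ)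
    (hℓ : 2 * Nat.clog 2 κ + 1 ≤ ℓ)
    (U W : Fin ℓ → Type*) [∀ i, Fintype (U i)] [∀ i, DecidableEq (U i)]
    [∀ i, Fintype (W i)] [∀ i, DecidableEq (W i)]
    (hne : ∀ i, Nonempty (U i))
    (hcard : ∀ i, Fintype.card (W i) = Fintype.card (U i) + 1)
    (T : ∀ i, Matrix (U i) (W i) F)
    (hT : ∀ i, StronglyFull (T i))
    (M : Finset (∀ i, W i)) (hM : M.card ≤ κ) :
    ∃ C : Finset (∀ i, W i), Disjoint C M ∧ C.card = Fintype.card (∀ i, U i) ∧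
      ∃ e : (∀ i, U i) ≃ C,
        IsUnit (Matrix.of fun u v : ∀ i, U i => ∏ i, T i (u i) ((e v).1 i)) := by
  classical
  -- the marked set is smaller than the minimum distance
  have hκℓ : κ < 2 ^ ℓ := by
    have h1 : κ ≤ 2 ^ Nat.clog 2 κ := Nat.le_pow_clog one_lt_two κ
    have h2 : 2 ^ Nat.clog 2 κ < 2 ^ ℓ :=
      Nat.pow_lt_pow_right one_lt_two (by omega)
    omega
  set K : Matrix (∀ i, U i) (∀ i, W i) F :=
    Matrix.of (fun u w => ∏ i, T i (u i) (w i)) with hK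
  set A : Matrix (∀ i, U i) {w : ∀ i, W i // w ∉ M} F :=
    K.submatrix id Subtype.val with hA
  -- rows of A are linearly independent
  have hrows : LinearIndependent F (fun u => A u) := by
    rw [Fintype.linearIndependent_iff]
    intro g hg
    by_contra hgo
    push_neg at hgo
    obtain ⟨u₀, hu₀⟩ := hgo
    have hg0 : g ≠ 0 := fun h => hu₀ (by rw [h]; rfl)
    have hsupp := key_support ℓ U W hcard T hT g hg0
    have hsub : (Finset.univ.filter
        (fun w : ∀ i, W i => (∑ u, g u * ∏ i, T i (u i) (w i)) ≠ 0)) ⊆ M := by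
      intro w hw
      simp only [Finset.mem_filter, Finset.mem_univ, true_and] at hw
      by_contra hwM
      apply hw
      have := congr_fun hg ⟨w, hwM⟩
      simpa [Finset.sum_apply, hA, hK] using this
    have h2 : 2 ^ ℓ ≤ M.card := le_trans hsupp (Finset.card_le_card hsub)
    exact absurd ((h2.trans hM).trans_lt hκℓ) (lt_irrefl _)
  -- columns of A span everything
  have hrank : A.rank = Fintype.card (∀ i, U i) := hrows.rank_matrix
  have hspan : Submodule.span F (Set.range Aᵀ) = ⊤ := by
    apply Submodule.eq_top_of_finrank_eq
    have : A.rank = Module.finrank F (Submodule.span F (Set.range Aᵀ)) :=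
      A.rank_eq_finrank_span_cols
    rw [← this, hrank, Module.finrank_fintype_fun_eq_card]
  -- extract a basis among the columns
  obtain ⟨b, hbsub, hbspan, hbind⟩ := exists_linearIndependent F (Set.range Aᵀ)
  rw [hspan] at hbspan
  haveI : Fintype b := ((Set.finite_range Aᵀ).subset hbsub).fintype
  let B : Module.Basis b F ((∀ i, U i) → F) :=
    Module.Basis.mk hbind (by rw [Subtype.range_coe]; rw [hbspan])
  have hcardb : Fintype.card (∀ i, U i) = Fintype.card b := by
    have := Module.finrank_eq_card_basis B
    rw [Module.finrank_fintype_fun_eq_card] at this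
    exact this
  -- choose column indices realising the basis vectors
  have hgex : ∀ v : b, ∃ j : {w : ∀ i, W i // w ∉ M}, Aᵀ j = (v : (∀ i, U i) → F) :=
    fun v => hbsub v.2
  choose g hgspec using hgex
  have hginj : Function.Injective g := fun v v' h => by
    apply Subtype.ext
    rw [← hgspec v, ← hgspec v', h]
  let ι : b → (∀ i, W i) := fun v => (g v).1
  have hιinj : Function.Injective ι := fun v v' h =>
    hginj (Subtype.ext h)
  refine ⟨Finset.univ.image ι, ?_, ?_, ?_⟩
  · rw [Finset.disjoint_left]
    intro w hw
    obtain ⟨v, _, rfl⟩ := Finset.mem_image.mp hw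
    exact (g v).2
  · rw [Finset.card_image_of_injective _ hιinj, Finset.card_univ, ← hcardb]
  · -- build the equivalence
    let eb : (∀ i, U i) ≃ b := Fintype.equivOfCardEq hcardb
    have hmem : ∀ v : b, ι v ∈ Finset.univ.image ι := fun v =>
      Finset.mem_image.mpr ⟨v, Finset.mem_univ v, rfl⟩
    let e2 : b ≃ (Finset.univ.image ι : Finset (∀ i, W i)) :=
      Equiv.ofBijective (fun v => ⟨ι v, hmem v⟩)
        ⟨fun v v' h => hιinj (by simpa using congr_arg Subtype.val h),
         fun c => by
          obtain ⟨v, _, hv⟩ := Finset.mem_image.mp c.2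
          exact ⟨v, Subtype.ext hv⟩⟩
    refine ⟨eb.trans e2, ?_⟩
    rw [← Matrix.linearIndependent_cols_iff_isUnit]
    have hcols : ∀ v : (∀ i, U i),
        (Matrix.of fun u v : ∀ i, U i =>
          ∏ i, T i (u i) (((eb.trans e2) v).1 i))ᵀ v = ((eb v : b) : (∀ i, U i) → F) := by
      intro v
      funext u
      exact congr_fun (hgspec (eb v)) u
    have : LinearIndependent F (fun v : (∀ i, U i) => ((eb v : b) : (∀ i, U i) → F)) :=
      hbind.comp eb eb.injective
    show LinearIndependent F (Matrix.of fun u v : ∀ i, U i =>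
      ∏ i, T i (u i) (((eb.trans e2) v).1 i))ᵀ
    exact (funext_iff.mpr hcols) ▸ this
end

section
/- Let F be a field, κ ≥ 1, and ℓ ≥ 2⌈log₂ κ⌉ + 1. For each i ∈ {1,…,ℓ}, let n_i ≥ 1, set U_i := {1,…,n_i} and W_i := {0,1,…,n_i}, and let T_i be a matrix over F with rows indexed by U_i and columns by W_i such that the submatrix (T_i)_{U_i,U_i} is the identity matrix and every entry of the column (T_i)_{U_i,0} is nonzero. Let T := ⊗_{i=1}^ℓ T_i be the Kronecker product, with rows indexed by U := ∏_i U_i and columns by W := ∏_i W_i. Let M₁ ⊆ U and M₂ ⊆ W ∖ U with |M₁| + |M₂| ≤ κ. Then there exists C₁ ⊆ (W ∖ U) ∖ M₂ with |C₁| = |M₁| such that the square submatrix T_{M₁,C₁} is invertible. -/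
open Finset

namespace KronMinor

variable {ℓ : ℕ} {n : Fin ℓ → ℕ}

/-- The column obtained from row index `u` by zeroing the coordinates in `S`. -/
def zcol (S : Finset (Fin ℓ)) (u : ∀ i, Fin (n i)) : ∀ i, Fin (n i + 1) :=
  fun i => if i ∈ S then 0 else (u i).succ

/-- `u` is isolated in `R` w.r.t. active coordinates `K` and zeroed set `S`:
every other element of `R` differs from `u` at some active coordinate outside `S`. -/
def Iso (K S : Finset (Fin ℓ)) (R : Finset (∀ i, Fin (n i))) (u : ∀ i, Fin (n i)) : Prop :=
  ∀ u' ∈ R, u' ≠ u → ∃ i, i ∈ K ∧ i ∉ S ∧ u' i ≠ u i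

instance (K S : Finset (Fin ℓ)) (R : Finset (∀ i, Fin (n i))) :
    DecidablePred (Iso K S R) := fun u => by unfold Iso; infer_instance

theorem sum_iso_card_ge (K : Finset (Fin ℓ)) :
    ∀ R : Finset (∀ i, Fin (n i)), R.Nonempty →
      (∀ u ∈ R, ∀ u' ∈ R, (∀ i ∈ K, u i = u' i) → u = u') →
      2 ^ K.card ≤ ∑ S ∈ K.powerset, (R.filter (Iso K S R)).card := by
  classical
  induction K using Finset.induction_on with
  | empty =>
    intro R hR hdist
    obtain ⟨u, hu⟩ := hR
    have hRu : R = {u} := by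
      apply Finset.eq_singleton_iff_unique_mem.2
      exact ⟨hu, fun x hx => hdist x hx u hu (by simp)⟩
    subst hRu
    simp only [Finset.card_empty, pow_zero, Finset.powerset_empty, Finset.sum_singleton]
    have : Iso (∅ : Finset (Fin ℓ)) ∅ {u} u := by
      intro u' hu' hne
      simp at hu'
      exact absurd hu' hne
    rw [Finset.filter_singleton, if_pos this]
    simp
  | @insert a K' ha ih =>
    intro R hR hdist
    rw [Finset.sum_powerset_insert ha]
    rw [Finset.card_insert_of_notMem ha, pow_succ, mul_two]
    -- second summand: inserting `a` into the zero set reduces to `K'`-isolation in all of `R`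
    have h2 : ∀ S' ∈ K'.powerset,
        (R.filter (Iso (insert a K') (insert a S') R)).card
          = (R.filter (Iso K' S' R)).card := by
      intro S' hS'
      have hS'K : S' ⊆ K' := Finset.mem_powerset.1 hS'
      congr 1
      apply Finset.filter_congr
      intro u _
      constructor
      · intro h u' hu' hne
        obtain ⟨i, hiK, hiS, hdiff⟩ := h u' hu' hne
        have hia : i ≠ a := fun h => hiS (h ▸ Finset.mem_insert_self a S')
        exact ⟨i, (Finset.mem_insert.1 hiK).resolve_left hia,
          fun hi => hiS (Finset.mem_insert_of_mem hi), hdiff⟩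
      · intro h u' hu' hne
        obtain ⟨i, hiK, hiS, hdiff⟩ := h u' hu' hne
        have hia : i ≠ a := fun h => ha (h ▸ hiK)
        exact ⟨i, Finset.mem_insert_of_mem hiK,
          by simp [Finset.mem_insert, hia, hiS], hdiff⟩
    rw [Finset.sum_congr rfl h2]
    by_cases hconst : ∀ u ∈ R, ∀ u' ∈ R, u a = u' a
    · -- the coordinate `a` is constant on `R`
      have h1 : ∀ S' ∈ K'.powerset,
          (R.filter (Iso (insert a K') S' R)).card = (R.filter (Iso K' S' R)).card := by
        intro S' hS'
        have hS'K : S' ⊆ K' := Finset.mem_powerset.1 hS'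
        congr 1
        apply Finset.filter_congr
        intro u huR
        constructor
        · intro h u' hu' hne
          obtain ⟨i, hiK, hiS, hdiff⟩ := h u' hu' hne
          have hia : i ≠ a := by
            intro h; subst h
            exact hdiff (hconst u' hu' u huR)
          exact ⟨i, (Finset.mem_insert.1 hiK).resolve_left hia, hiS, hdiff⟩
        · intro h u' hu' hne
          obtain ⟨i, hiK, hiS, hdiff⟩ := h u' hu' hne
          exact ⟨i, Finset.mem_insert_of_mem hiK, hiS, hdiff⟩
      rw [Finset.sum_congr rfl h1]
      have hdist' : ∀ u ∈ R, ∀ u' ∈ R, (∀ i ∈ K', u i = u' i) → u = u' := by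
        intro u hu u' hu' hagree
        refine hdist u hu u' hu' ?_
        intro i hi
        rcases Finset.mem_insert.1 hi with h | h
        · subst h; exact hconst u hu u' hu'
        · exact hagree i h
      have := ih R hR hdist'
      omega
    · -- the coordinate `a` takes at least two values on `R`
      push_neg at hconst
      obtain ⟨u₀, hu₀, u₁, hu₁, hne01⟩ := hconst
      have himage : 2 ≤ (R.image (fun u => u a)).card := by
        apply Finset.one_lt_card.2
        exact ⟨u₀ a, Finset.mem_image_of_mem _ hu₀, u₁ a, Finset.mem_image_of_mem _ hu₁,
          hne01⟩
      -- for each `S' ⊆ K'`, fiberwise isolation lower-bounds isolation in `R`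
      have h1 : ∀ S' ∈ K'.powerset,
          ∑ v ∈ R.image (fun u => u a),
              ((R.filter (fun u => u a = v)).filter
                (Iso K' S' (R.filter (fun u => u a = v)))).card
            ≤ (R.filter (Iso (insert a K') S' R)).card := by
        intro S' hS'
        have hS'K : S' ⊆ K' := Finset.mem_powerset.1 hS'
        rw [← Finset.card_biUnion]
        · apply Finset.card_le_card
          intro u hu
          rw [Finset.mem_biUnion] at hu
          obtain ⟨v, _hv, hu⟩ := hu
          rw [Finset.mem_filter] at hu ⊢
          obtain ⟨huv, hiso⟩ := hu
          rw [Finset.mem_filter] at huv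
          refine ⟨huv.1, ?_⟩
          intro u' hu' hne
          by_cases hva : u' a = u a
          · obtain ⟨i, hiK, hiS, hdiff⟩ := hiso u'
              (Finset.mem_filter.2 ⟨hu', by rw [hva, huv.2]⟩) hne
            exact ⟨i, Finset.mem_insert_of_mem hiK, hiS, hdiff⟩
          · exact ⟨a, Finset.mem_insert_self a K', fun h => ha (hS'K h), hva⟩
        · intro v₁ h₁ v₂ h₂ hne
          rw [Function.onFun, Finset.disjoint_left]
          intro u hu1 hu2
          rw [Finset.mem_filter] at hu1 hu2
          rw [Finset.mem_filter] at hu1 hu2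
          exact hne ((hu1.1.2).symm.trans hu2.1.2)
      have hIH : ∀ v ∈ R.image (fun u => u a),
          2 ^ K'.card ≤ ∑ S' ∈ K'.powerset,
            ((R.filter (fun u => u a = v)).filter
              (Iso K' S' (R.filter (fun u => u a = v)))).card := by
        intro v hv
        obtain ⟨u, hu, huv⟩ := Finset.mem_image.1 hv
        apply ih
        · exact ⟨u, Finset.mem_filter.2 ⟨hu, huv⟩⟩
        · intro x hx y hy hagree
          rw [Finset.mem_filter] at hx hy
          refine hdist x hx.1 y hy.1 ?_
          intro i hi
          rcases Finset.mem_insert.1 hi with h | h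
          · subst h; rw [hx.2, hy.2]
          · exact hagree i h
      have hbig : 2 * 2 ^ K'.card ≤ ∑ S' ∈ K'.powerset,
          (R.filter (Iso (insert a K') S' R)).card := by
        calc 2 * 2 ^ K'.card ≤ (R.image (fun u => u a)).card * 2 ^ K'.card := by
              apply Nat.mul_le_mul_right _ himage
          _ ≤ ∑ v ∈ R.image (fun u => u a), ∑ S' ∈ K'.powerset,
                ((R.filter (fun u => u a = v)).filter
                  (Iso K' S' (R.filter (fun u => u a = v)))).card := by
              rw [← smul_eq_mul]
              exact Finset.card_nsmul_le_sum _ _ _ hIH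
          _ = ∑ S' ∈ K'.powerset, ∑ v ∈ R.image (fun u => u a),
                ((R.filter (fun u => u a = v)).filter
                  (Iso K' S' (R.filter (fun u => u a = v)))).card := Finset.sum_comm
          _ ≤ _ := Finset.sum_le_sum h1
      rw [← two_mul]
      exact le_trans hbig (Nat.le_add_right _ _)



theorem exists_isolated_many (R : Finset (∀ i, Fin (n i))) (hR : R.Nonempty) :
    ∃ u ∈ R, 2 ^ ℓ ≤ R.card *
      ((Finset.univ : Finset (Fin ℓ)).powerset.filter (fun S => Iso Finset.univ S R u)).card := by
  classical
  have key := sum_iso_card_ge (Finset.univ : Finset (Fin ℓ)) R hR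
    (fun u _ u' _ h => funext fun i => h i (Finset.mem_univ i))
  rw [Finset.card_univ, Fintype.card_fin] at key
  have hswap : ∑ S ∈ (Finset.univ : Finset (Fin ℓ)).powerset, (R.filter (Iso Finset.univ S R)).card
      = ∑ u ∈ R,
        ((Finset.univ : Finset (Fin ℓ)).powerset.filter (fun S => Iso Finset.univ S R u)).card := by
    simp only [Finset.card_filter]
    exact Finset.sum_comm
  rw [hswap] at key
  obtain ⟨u, hu, hmax⟩ := Finset.exists_max_image R
    (fun u => ((Finset.univ : Finset (Fin ℓ)).powerset.filter
      (fun S => Iso Finset.univ S R u)).card) hR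
  refine ⟨u, hu, le_trans key ?_⟩
  rw [← smul_eq_mul]
  exact Finset.sum_le_card_nsmul R _ _ (fun x hx => hmax x hx)

theorem zcol_inj (u : ∀ i, Fin (n i)) {S S' : Finset (Fin ℓ)} {u' : ∀ i, Fin (n i)}
    (h : zcol S u = zcol S' u') : S = S' ∧ ∀ i ∉ S, u i = u' i := by
  have hS : S = S' := by
    ext i
    have hi := congrFun h i
    unfold zcol at hi
    constructor
    · intro hiS
      by_contra hiS'
      rw [if_pos hiS, if_neg hiS'] at hi
      exact (Fin.succ_ne_zero _) hi.symm
    · intro hiS'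
      by_contra hiS
      rw [if_neg hiS, if_pos hiS'] at hi
      exact (Fin.succ_ne_zero _) hi
  subst hS
  refine ⟨rfl, fun i hi => ?_⟩
  have hi' := congrFun h i
  unfold zcol at hi'
  rw [if_neg hi, if_neg hi] at hi'
  exact Fin.succ_injective _ hi'

theorem exists_assignment (κ : ℕ) (hκ : 1 ≤ κ) (hℓ : 2 * Nat.clog 2 κ + 1 ≤ ℓ)
    (M₂ : Finset (∀ i, Fin (n i + 1))) :
    ∀ N : ℕ, ∀ R : Finset (∀ i, Fin (n i)), R.card = N → R.card + M₂.card ≤ κ →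
      ∃ (σ : (∀ i, Fin (n i)) → Finset (Fin ℓ)) (rk : (∀ i, Fin (n i)) → ℕ),
        (∀ u ∈ R, (σ u).Nonempty) ∧
        (∀ u ∈ R, zcol (σ u) u ∉ M₂) ∧
        (∀ u ∈ R, rk u < R.card) ∧
        (∀ u ∈ R, ∀ u' ∈ R, u' ≠ u → (∀ i ∉ σ u, u' i = u i) → rk u < rk u') := by
  classical
  intro N
  induction N with
  | zero =>
    intro R hcard _
    rw [Finset.card_eq_zero] at hcard
    subst hcard
    exact ⟨fun _ => ∅, fun _ => 0, by simp, by simp, by simp, by simp⟩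
  | succ N ihN =>
    intro R hcard hκR
    have hR : R.Nonempty := Finset.card_pos.1 (by omega)
    obtain ⟨u, hu, hcnt⟩ := exists_isolated_many R hR
    set free := (Finset.univ : Finset (Fin ℓ)).powerset.filter
      (fun S => Iso Finset.univ S R u) with hfree
    -- counting: `free.card ≥ M₂.card + 2`
    have hRκ : R.card ≤ κ := by omega
    have hκpow : κ ≤ 2 ^ Nat.clog 2 κ := Nat.le_pow_clog one_lt_two κ
    have hpow : 2 * κ * κ ≤ 2 ^ ℓ := by
      calc 2 * κ * κ ≤ 2 * (2 ^ Nat.clog 2 κ * 2 ^ Nat.clog 2 κ) := by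
            rw [mul_assoc]; exact Nat.mul_le_mul_left 2 (Nat.mul_le_mul hκpow hκpow)
        _ = 2 ^ (2 * Nat.clog 2 κ + 1) := by rw [pow_succ, two_mul (Nat.clog 2 κ), pow_add]; ring
        _ ≤ 2 ^ ℓ := Nat.pow_le_pow_right (by norm_num) hℓ
    have hfree_big : M₂.card + 2 ≤ free.card := by
      have h1 : R.card * (M₂.card + 2) ≤ R.card * free.card := by
        calc R.card * (M₂.card + 2) ≤ κ * (κ + 1) := by
              apply Nat.mul_le_mul hRκ; omega
          _ ≤ 2 * κ * κ := by nlinarith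
          _ ≤ 2 ^ ℓ := hpow
          _ ≤ R.card * free.card := hcnt
      exact Nat.le_of_mul_le_mul_left h1 (by omega)
    -- the bad zero-sets : the empty set and those giving a column in M₂
    have hbad : ∃ S ∈ free, S ≠ ∅ ∧ zcol S u ∉ M₂ := by
      set bad := insert (∅ : Finset (Fin ℓ)) (free.filter (fun S => zcol S u ∈ M₂)) with hbad
      have hbadcard : bad.card ≤ M₂.card + 1 := by
        calc bad.card ≤ (free.filter (fun S => zcol S u ∈ M₂)).card + 1 :=
              Finset.card_insert_le _ _
          _ ≤ M₂.card + 1 := by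
              apply Nat.add_le_add_right
              apply Finset.card_le_card_of_injOn (fun S => zcol S u)
              · intro S hS; exact (Finset.mem_filter.1 hS).2
              · intro S hS S' hS' hSS'
                exact (zcol_inj u hSS').1
      have hnotsub : ¬ free ⊆ bad := by
        intro hsub
        have := Finset.card_le_card hsub
        omega
      obtain ⟨S, hS, hSbad⟩ := Finset.not_subset.1 hnotsub
      rw [hbad, Finset.mem_insert] at hSbad
      push_neg at hSbad
      refine ⟨S, hS, Finset.nonempty_iff_ne_empty.1 hSbad.1, ?_⟩
      intro hmem
      exact hSbad.2 (Finset.mem_filter.2 ⟨hS, hmem⟩)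
    obtain ⟨S, hSfree, hSne, hSM₂⟩ := hbad
    have hSiso : Iso Finset.univ S R u := (Finset.mem_filter.1 hSfree).2
    -- recurse on R.erase u
    have herase : (R.erase u).card = N := by rw [Finset.card_erase_of_mem hu]; omega
    obtain ⟨σ', rk', h1', h2', h3', h4'⟩ := ihN (R.erase u) herase (by omega)
    refine ⟨Function.update σ' u S, Function.update rk' u N, ?_, ?_, ?_, ?_⟩
    · intro x hx
      by_cases hxu : x = u
      · subst hxu; rw [Function.update_self]; exact Finset.nonempty_iff_ne_empty.2 hSne
      · rw [Function.update_of_ne hxu]; exact h1' x (Finset.mem_erase.2 ⟨hxu, hx⟩)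
    · intro x hx
      by_cases hxu : x = u
      · subst hxu; rw [Function.update_self]; exact hSM₂
      · rw [Function.update_of_ne hxu]; exact h2' x (Finset.mem_erase.2 ⟨hxu, hx⟩)
    · intro x hx
      by_cases hxu : x = u
      · subst hxu; rw [Function.update_self]; omega
      · rw [Function.update_of_ne hxu]
        have := h3' x (Finset.mem_erase.2 ⟨hxu, hx⟩)
        omega
    · intro x hx x' hx' hne hagree
      by_cases hxu : x = u
      · subst hxu
        rw [Function.update_self] at hagree
        obtain ⟨i, _, hiS, hdiff⟩ := hSiso x' hx' hne
        exact absurd (hagree i hiS) hdiff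
      · rw [Function.update_of_ne hxu] at hagree ⊢
        by_cases hx'u : x' = u
        · subst hx'u
          rw [Function.update_self]
          have := h3' x (Finset.mem_erase.2 ⟨hxu, hx⟩)
          omega
        · rw [Function.update_of_ne hx'u]
          exact h4' x (Finset.mem_erase.2 ⟨hxu, hx⟩) x'
            (Finset.mem_erase.2 ⟨hx'u, hx'⟩) hne hagree

end KronMinor


/-- **Claim inside the invertible-minor theorem.**  Each `A i` is an `n_i × (n_i + 1)`
matrix over `F` whose columns `1,…,n_i` form the identity matrix and whose column `0`
is zero-free; `T = ⊗ᵢ A i` is their Kronecker product.  Given marked rows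
`M₁ ⊆ U = ∏ᵢ {1,…,n_i}` and marked columns `M₂ ⊆ W ∖ U` (tuples with at least one
zero coordinate) with `|M₁| + |M₂| ≤ κ ` and `ℓ ≥ 2⌈log₂ κ⌉ + 1`, there exist unmarked
columns `C₁ ⊆ (W ∖ U) ∖ M₂` with `|C₁| = |M₁|` such that the square submatrix
`T_{M₁,C₁}` is invertible. -/
theorem kronecker_lower_triangular_minor {F : Type*} [Field F] (κ ℓ : ℕ)
    (hκ : 1 ≤ κ) (hℓ : 2 * Nat.clog 2 κ + 1 ≤ ℓ)
    (n : Fin ℓ → ℕ) (hn : ∀ i, 1 ≤ n i)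
    (A : ∀ i, Matrix (Fin (n i)) (Fin (n i + 1)) F)
    (hId : ∀ i, ∀ u v : Fin (n i), A i u v.succ = if u = v then 1 else 0)
    (hCol0 : ∀ i, ∀ u : Fin (n i), A i u 0 ≠ 0)
    (M₁ : Finset (∀ i, Fin (n i)))
    (M₂ : Finset (∀ i, Fin (n i + 1)))
    (hM₂ : ∀ w ∈ M₂, ∃ i, w i = 0)
    (hcard : M₁.card + M₂.card ≤ κ) :
    ∃ C₁ : Finset (∀ i, Fin (n i + 1)),
      (∀ w ∈ C₁, ∃ i, w i = 0) ∧ Disjoint C₁ M₂ ∧ C₁.card = M₁.card ∧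
      ∃ e : M₁ ≃ C₁,
        IsUnit (Matrix.of fun u v : M₁ => ∏ i, A i (u.1 i) ((e v).1 i)) := by
  classical
  obtain ⟨σ, rk, h1, h2, h3, h4⟩ :=
    KronMinor.exists_assignment κ hκ hℓ M₂ M₁.card M₁ rfl hcard
  set f : (∀ i, Fin (n i)) → (∀ i, Fin (n i + 1)) := fun u => KronMinor.zcol (σ u) u with hf
  have hinj : ∀ u ∈ M₁, ∀ v ∈ M₁, f u = f v → u = v := by
    intro u hu v hv heq
    by_contra hne
    obtain ⟨hS, hagree⟩ := KronMinor.zcol_inj u heq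
    have hlt₁ : rk u < rk v := h4 u hu v hv (Ne.symm hne) (fun i hi => (hagree i hi).symm)
    have hlt₂ : rk v < rk u := by
      refine h4 v hv u hu hne (fun i hi => hagree i ?_)
      rwa [hS]
    omega
  refine ⟨M₁.image f, ?_, ?_, ?_, ?_⟩
  · intro w hw
    obtain ⟨u, hu, rfl⟩ := Finset.mem_image.1 hw
    obtain ⟨i, hi⟩ := h1 u hu
    exact ⟨i, by simp [hf, KronMinor.zcol, hi]⟩
  · rw [Finset.disjoint_left]
    intro w hw
    obtain ⟨u, hu, rfl⟩ := Finset.mem_image.1 hw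
    exact h2 u hu
  · exact Finset.card_image_of_injOn hinj
  · have hbij : Function.Bijective
        (fun u : M₁ => (⟨f u.1, Finset.mem_image_of_mem f u.2⟩ : (M₁.image f : Finset _))) := by
      constructor
      · intro a b hab
        exact Subtype.ext (hinj a.1 a.2 b.1 b.2 (congrArg Subtype.val hab))
      · rintro ⟨w, hw⟩
        obtain ⟨u, hu, heq⟩ := Finset.mem_image.1 hw
        exact ⟨⟨u, hu⟩, Subtype.ext heq⟩
    refine ⟨Equiv.ofBijective _ hbij, ?_⟩
    rw [Matrix.isUnit_iff_isUnit_det, isUnit_iff_ne_zero]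
    intro hdet
    rw [← Matrix.exists_mulVec_eq_zero_iff] at hdet
    obtain ⟨g, hg0, hgv⟩ := hdet
    -- entries of the matrix
    have hentry : ∀ u v : M₁,
        (Matrix.of fun u v : M₁ => ∏ i, A i (u.1 i)
          ((Equiv.ofBijective _ hbij v).1 i)) u v
        = ∏ i, A i (u.1 i) (KronMinor.zcol (σ v.1) v.1 i) := fun u v => rfl
    have hdiag : ∀ v : M₁,
        (∏ i, A i (v.1 i) (KronMinor.zcol (σ v.1) v.1 i)) ≠ 0 := by
      intro v
      rw [Finset.prod_ne_zero_iff]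
      intro i _
      by_cases hi : i ∈ σ v.1
      · simp only [KronMinor.zcol, if_pos hi]
        exact hCol0 i _
      · simp only [KronMinor.zcol, if_neg hi]
        rw [hId i]
        simp
    have hoff : ∀ u v : M₁,
        (∏ i, A i (u.1 i) (KronMinor.zcol (σ v.1) v.1 i)) ≠ 0 →
          ∀ i ∉ σ v.1, u.1 i = v.1 i := by
      intro u v hne i hi
      by_contra hdiff
      apply hne
      apply Finset.prod_eq_zero (Finset.mem_univ i)
      simp only [KronMinor.zcol, if_neg hi]
      rw [hId i, if_neg hdiff]
    -- pick a support element of minimal rank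
    have hsupp : (Finset.univ.filter (fun v : M₁ => g v ≠ 0)).Nonempty := by
      obtain ⟨x, hx⟩ := Function.ne_iff.1 hg0
      exact ⟨x, Finset.mem_filter.2 ⟨Finset.mem_univ x, hx⟩⟩
    obtain ⟨v₀, hv₀, hmin⟩ := Finset.exists_min_image _ (fun v : M₁ => rk v.1) hsupp
    have hv₀ne : g v₀ ≠ 0 := (Finset.mem_filter.1 hv₀).2
    have hrow := congrFun hgv v₀
    rw [Matrix.mulVec, dotProduct] at hrow
    rw [Finset.sum_eq_single v₀] at hrow
    · rw [hentry] at hrow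
      exact hv₀ne (by
        rcases mul_eq_zero.1 hrow with h | h
        · exact absurd h (hdiag v₀)
        · exact h)
    · intro x _ hxne
      by_cases hgx : g x = 0
      · rw [hgx, mul_zero]
      · have hxsupp : x ∈ Finset.univ.filter (fun v : M₁ => g v ≠ 0) :=
          Finset.mem_filter.2 ⟨Finset.mem_univ x, hgx⟩
        have hle : rk v₀.1 ≤ rk x.1 := hmin x hxsupp
        rw [hentry]
        have hzero : (∏ i, A i (v₀.1 i) (KronMinor.zcol (σ x.1) x.1 i)) = 0 := by
          by_contra hne
          have hagree := hoff v₀ x hne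
          have hne' : v₀.1 ≠ x.1 := fun h => hxne (Subtype.ext h.symm)
          have := h4 x.1 x.2 v₀.1 v₀.2 hne' hagree
          omega
        rw [hzero, zero_mul]
    · intro h
      exact absurd (Finset.mem_univ v₀) h
end

section
/- Let ℓ ≥ 1, let U₁,…,U_ℓ be nonempty sets, let m ≥ 1, and let u₁,…,u_m be pairwise distinct elements of ∏_{i=1}^ℓ U_i. Then there exists a permutation π of {1,…,m} such that for every i ∈ {1,…,m} there exists a set of positions I ⊆ {1,…,ℓ} with |I| ≤ ⌈log₂ i⌉ such that for every j < i there is some r ∈ I with u_{π(j)}(r) ≠ u_{π(i)}(r) (i.e., the restriction of u_{π(i)} to the coordinates I differs from the restriction of each earlier tuple u_{π(j)} to I). -/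
private lemma clog_aux {k b : ℕ} (hk : 1 ≤ k) (hkb : k ≤ b) :
    Nat.clog 2 k + 1 ≤ Nat.clog 2 (b + k) := by
  have h1 : 2 * k ≤ 2 ^ Nat.clog 2 (2 * k) := Nat.le_pow_clog one_lt_two _
  have ht : 1 ≤ Nat.clog 2 (2 * k) := Nat.clog_pos one_lt_two (by omega)
  have hpow : 2 ^ Nat.clog 2 (2 * k) = 2 * 2 ^ (Nat.clog 2 (2 * k) - 1) := by
    rw [← pow_succ']
    congr 1
    omega
  have h2 : k ≤ 2 ^ (Nat.clog 2 (2 * k) - 1) := by omega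
  have h3 : Nat.clog 2 k ≤ Nat.clog 2 (2 * k) - 1 :=
    (Nat.clog_le_iff_le_pow one_lt_two).mpr h2
  have h4 : Nat.clog 2 (2 * k) ≤ Nat.clog 2 (b + k) :=
    Nat.clog_mono_right 2 (by omega)
  omega

private lemma key_list {ℓ : ℕ} {U : Fin ℓ → Type*} [DecidableEq (∀ i, U i)] :
    ∀ (n : ℕ) (S : Finset (∀ i, U i)), S.card = n →
    ∃ l : List (∀ i, U i), l.Nodup ∧ l.toFinset = S ∧
      ∀ (i : ℕ) (hi : i < l.length), ∃ I : Finset (Fin ℓ),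
        I.card ≤ Nat.clog 2 (i + 1) ∧
        ∀ (j : ℕ) (hj : j < l.length), j < i →
          ∃ r ∈ I, (l[j]'hj) r ≠ (l[i]'hi) r := by
  classical
  intro n
  induction n using Nat.strong_induction_on with
  | _ n IH =>
    intro S hS
    by_cases hone : ∀ x ∈ S, ∀ y ∈ S, x = y
    · -- S has at most one element
      refine ⟨S.toList, S.nodup_toList, S.toList_toFinset, ?_⟩
      intro i hi
      refine ⟨∅, by simp, ?_⟩
      intro j hj hji
      exfalso
      have hmj : S.toList[j] ∈ S := Finset.mem_toList.mp (List.getElem_mem hj)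
      have hmi : S.toList[i] ∈ S := Finset.mem_toList.mp (List.getElem_mem hi)
      have heq : S.toList[j] = S.toList[i] := hone _ hmj _ hmi
      have := (S.nodup_toList.getElem_inj_iff).mp heq
      omega
    · push_neg at hone
      obtain ⟨x, hxS, y, hyS, hxy⟩ := hone
      obtain ⟨r, hr⟩ := Function.ne_iff.mp hxy
      -- choose a value v whose class is the smaller side
      have hmain : ∃ v : U r, (S.filter fun z : ∀ i, U i => z r = v).Nonempty ∧
          2 * (S.filter fun z : ∀ i, U i => z r = v).card ≤ S.card := by
        have hdisj : Disjoint (S.filter fun z : ∀ i, U i => z r = x r)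
            (S.filter fun z : ∀ i, U i => z r = y r) := by
          rw [Finset.disjoint_left]
          intro a ha hb
          have h1 := (Finset.mem_filter.mp ha).2
          have h2 := (Finset.mem_filter.mp hb).2
          exact hr (h1 ▸ h2)
        have hsum : (S.filter fun z : ∀ i, U i => z r = x r).card +
            (S.filter fun z : ∀ i, U i => z r = y r).card ≤ S.card := by
          rw [← Finset.card_union_of_disjoint hdisj]
          exact Finset.card_le_card
            (Finset.union_subset (Finset.filter_subset _ _) (Finset.filter_subset _ _))
        rcases le_total ((S.filter fun z : ∀ i, U i => z r = x r).card)
            ((S.filter fun z : ∀ i, U i => z r = y r).card) with h | h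
        · refine ⟨x r, ⟨x, Finset.mem_filter.mpr ⟨hxS, rfl⟩⟩, ?_⟩
          calc 2 * (S.filter fun z : ∀ i, U i => z r = x r).card
              = (S.filter fun z : ∀ i, U i => z r = x r).card
                + (S.filter fun z : ∀ i, U i => z r = x r).card := two_mul _
            _ ≤ (S.filter fun z : ∀ i, U i => z r = x r).card
                + (S.filter fun z : ∀ i, U i => z r = y r).card := Nat.add_le_add_left h _
            _ ≤ S.card := hsum
        · refine ⟨y r, ⟨y, Finset.mem_filter.mpr ⟨hyS, rfl⟩⟩, ?_⟩
          calc 2 * (S.filter fun z : ∀ i, U i => z r = y r).card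
              = (S.filter fun z : ∀ i, U i => z r = y r).card
                + (S.filter fun z : ∀ i, U i => z r = y r).card := two_mul _
            _ ≤ (S.filter fun z : ∀ i, U i => z r = x r).card
                + (S.filter fun z : ∀ i, U i => z r = y r).card := Nat.add_le_add_right h _
            _ ≤ S.card := hsum
      obtain ⟨v, hAne, hAcard⟩ := hmain
      set A := S.filter (fun z : ∀ i, U i => z r = v) with hA
      set B := S \ A with hB
      have hAS : A ⊆ S := Finset.filter_subset _ _
      have hBA : B ∪ A = S := Finset.sdiff_union_of_subset hAS
      have hcardB : B.card = n - A.card := by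
        rw [hB, Finset.card_sdiff_of_subset hAS, hS]
      have hApos : 1 ≤ A.card := Finset.card_pos.mpr hAne
      have hAleS : A.card ≤ S.card := Finset.card_le_card hAS
      have hAn : A.card < n := by omega
      have hBn : B.card < n := by omega
      obtain ⟨lA, ndA, tfA, hlA⟩ := IH A.card hAn A rfl
      obtain ⟨lB, ndB, tfB, hlB⟩ := IH B.card hBn B rfl
      have lenA : lA.length = A.card := by
        rw [← List.toFinset_card_of_nodup ndA, tfA]
      have lenB : lB.length = B.card := by
        rw [← List.toFinset_card_of_nodup ndB, tfB]
      have memA : ∀ z ∈ lA, z ∈ A := fun z hz => tfA ▸ List.mem_toFinset.mpr hz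
      have memB : ∀ z ∈ lB, z ∈ B := fun z hz => tfB ▸ List.mem_toFinset.mpr hz
      have hALeB : A.card ≤ B.card := by omega
      refine ⟨lB ++ lA, ?_, ?_, ?_⟩
      · refine ndB.append ndA ?_
        intro a haB haA
        have h1 := Finset.mem_sdiff.mp (memB a haB)
        exact h1.2 (memA a haA)
      · rw [List.toFinset_append, tfB, tfA, hBA]
      · intro i hi
        have hi' : i < lB.length + lA.length := by
          simpa using hi
        by_cases hib : i < lB.length
        · obtain ⟨I, hIc, hIj⟩ := hlB i hib
          refine ⟨I, hIc, ?_⟩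
          intro j hj hji
          have hjb : j < lB.length := by omega
          obtain ⟨r', hr'I, hne⟩ := hIj j hjb hji
          refine ⟨r', hr'I, ?_⟩
          rwa [List.getElem_append_left hjb, List.getElem_append_left hib]
        · push_neg at hib
          have hi'' : i - lB.length < lA.length := by omega
          obtain ⟨I, hIc, hIj⟩ := hlA (i - lB.length) hi''
          have hgi : (lB ++ lA)[i]'hi = lA[i - lB.length]'hi'' :=
            List.getElem_append_right hib
          refine ⟨insert r I, ?_, ?_⟩
          · calc (insert r I).card ≤ I.card + 1 := Finset.card_insert_le _ _
              _ ≤ Nat.clog 2 (i - lB.length + 1) + 1 := by omega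
              _ ≤ Nat.clog 2 (lB.length + (i - lB.length + 1)) :=
                  clog_aux (by omega) (by omega)
              _ = Nat.clog 2 (i + 1) := by congr 1; omega
          · intro j hj hji
            have hj' : j < lB.length + lA.length := by simpa using hj
            by_cases hjb : j < lB.length
            · refine ⟨r, Finset.mem_insert_self _ _, ?_⟩
              rw [List.getElem_append_left hjb, hgi]
              have hBj := Finset.mem_sdiff.mp (memB _ (List.getElem_mem hjb))
              have hAi : lA[i - lB.length] ∈ A := memA _ (List.getElem_mem hi'')
              have hv1 : (lA[i - lB.length]'hi'') r = v := (Finset.mem_filter.mp hAi).2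
              rw [hv1]
              intro h
              exact hBj.2 (Finset.mem_filter.mpr ⟨hBj.1, h⟩)
            · push_neg at hjb
              have hjA : j - lB.length < lA.length := by omega
              obtain ⟨r', hr'I, hne⟩ := hIj (j - lB.length) hjA (by omega)
              refine ⟨r', Finset.mem_insert_of_mem hr'I, ?_⟩
              rwa [List.getElem_append_right hjb, hgi]

/-- **Ordering tuples for binary search.**  Given `m` pairwise distinct tuples
`u₁,…,u_m ∈ ∏ᵢ Uᵢ`, they can be reordered by a permutation `π` so that for each `i`
there is a set `I` of at most `⌈log₂ i⌉` coordinate positions (here `i` is the 1-based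
position, i.e. `⌈log₂ (i+1)⌉` for the 0-based index) on which the `i`-th tuple differs
from every earlier tuple. -/
theorem exists_perm_binary_search (ℓ m : ℕ) (hℓ : 1 ≤ ℓ) (hm : 1 ≤ m)
    (U : Fin ℓ → Type*) (hU : ∀ i, Nonempty (U i))
    (u : Fin m → ∀ i, U i) (hu : Function.Injective u) :
    ∃ π : Equiv.Perm (Fin m), ∀ i : Fin m, ∃ I : Finset (Fin ℓ),
      I.card ≤ Nat.clog 2 (i.1 + 1) ∧
      ∀ j : Fin m, j < i → ∃ r ∈ I, u (π j) r ≠ u (π i) r := by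
  classical
  set S : Finset (∀ i, U i) := Finset.univ.image u with hSdef
  have hScard : S.card = m := by
    rw [hSdef, Finset.card_image_of_injective _ hu, Finset.card_univ, Fintype.card_fin]
  obtain ⟨l, hnd, htf, hprop⟩ := key_list m S hScard
  have hlen : l.length = m := by
    rw [← List.toFinset_card_of_nodup hnd, htf]
    exact hScard
  have hmem : ∀ (i : Fin m), ∃ j : Fin m, u j = l[i.1]'(by omega) := by
    intro i
    have hm' : l[i.1]'(by omega) ∈ l.toFinset := List.mem_toFinset.mpr (List.getElem_mem _)
    rw [htf] at hm' 
    obtain ⟨j, _, hj⟩ := Finset.mem_image.mp hm'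
    exact ⟨j, hj⟩
  choose f hf using hmem
  have finj : Function.Injective f := by
    intro a b hab
    have h1 : l[a.1]'(by omega) = l[b.1]'(by omega) := by
      rw [← hf a, ← hf b, hab]
    have := (hnd.getElem_inj_iff).mp h1
    exact Fin.ext this
  have fbij : Function.Bijective f := Finite.injective_iff_bijective.mp finj
  refine ⟨Equiv.ofBijective f fbij, ?_⟩
  intro i
  obtain ⟨I, hIc, hIj⟩ := hprop i.1 (by omega)
  refine ⟨I, hIc, ?_⟩
  intro j hji
  obtain ⟨r, hrI, hne⟩ := hIj j.1 (by omega) hji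
  refine ⟨r, hrI, ?_⟩
  show u (f j) r ≠ u (f i) r
  rw [hf j, hf i]
  exact hne
end

section
/- Let F be a field and let S' and S be finite sets with C ⊆ S and |C| = |S'|. Let ω : S → ℕ be a weight function, let T' be a matrix over F with rows indexed by S' and columns by S such that the square submatrix T'_{S',C} (all rows, columns C) has nonzero determinant, and let A be a matrix over F with rows indexed by S and columns by C such that for every v ∈ C: A(v,v) = 1, and for every u ∈ S with u ≠ v and A(u,v) ≠ 0 one has ω(u) > ω(v). Over the field F(y) of rational functions in one variable y, let N be the diagonal S × S matrix with (u,u) entry y^{ω(u)}. Then det(T' · N⁻¹ · A) ≠ 0 in F(y); moreover, writing det(T' · N⁻¹ · A) as a Laurent polynomial in y, its coefficient of y^{−Σ_{v ∈ C} ω(v)} equals det(T'_{S',C}), and every other monomial occurring in it has strictly smaller exponent. -/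
open Polynomial Matrix

private lemma coeff_prod_of_natDegree_le' {R ι : Type*} [CommSemiring R] (s : Finset ι)
    (f : ι → R[X]) (d : ι → ℕ) (h : ∀ i ∈ s, (f i).natDegree ≤ d i) :
    (∏ i ∈ s, f i).coeff (∑ i ∈ s, d i) = ∏ i ∈ s, (f i).coeff (d i) := by
  classical
  induction s using Finset.induction with
  | empty => simp
  | @insert a s hni ih =>
    rw [Finset.prod_insert hni, Finset.sum_insert hni,
      Polynomial.coeff_mul_add_eq_of_natDegree_le (h _ (Finset.mem_insert_self _ _))
        ((Polynomial.natDegree_prod_le _ _).trans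
          (Finset.sum_le_sum fun i hi => h i (Finset.mem_insert_of_mem hi))),
      ih (fun i hi => h i (Finset.mem_insert_of_mem hi)), Finset.prod_insert hni]




set_option maxHeartbeats 1000000 in
set_option synthInstance.maxHeartbeats 200000 in
/-- **Determinant of `T'·N⁻¹·A` and its leading term.**  Let `C ⊆ S` with
`|C| = |S'|` (witnessed by the bijection `e : S' ≃ C`), let `T'` be an `S' × S`
matrix over `F` whose square submatrix on the columns `C` has nonzero determinant,
and let `A` be an `S × C` matrix with `A(v,v) = 1` for `v ∈ C` and such that any other
nonzero entry `A(u,v) ≠ 0` (`u ≠ v`) satisfies `ω(u) > ω(v)`.  Over `F(y)`, with `N`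
the diagonal matrix with entries `y^{ω(u)}`, the determinant of `T'·N⁻¹·A` (squared up
via `e`) is nonzero; moreover `y^m · det(T'·N⁻¹·A)` is (the image of) a polynomial `p`
for some `m ≥ W := Σ_{v∈C} ω(v)`, with `deg p ≤ m − W` and `p.coeff (m − W) =
det(T'_{S',C})` — i.e. the coefficient of `y^{−W}` in the Laurent expansion is
`det(T'_{S',C})` and every other monomial has strictly smaller exponent. -/
theorem det_transfer_nullspace {F : Type*} [Field F] {S' S : Type*}
    [Fintype S'] [DecidableEq S'] [Fintype S] [DecidableEq S]
    (C : Finset S) (hcard : C.card = Fintype.card S')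
    (ω : S → ℕ) (T' : Matrix S' S F) (e : S' ≃ C)
    (hdet : (Matrix.of fun a b : S' => T' a (e b).1).det ≠ 0)
    (A : Matrix S C F)
    (hA1 : ∀ v : C, A (v : S) v = 1)
    (hA2 : ∀ v : C, ∀ u : S, u ≠ (v : S) → A u v ≠ 0 → ω (v : S) < ω u) :
    (Matrix.of fun a b : S' =>
        (T'.map ((algebraMap (Polynomial F) (RatFunc F)).comp Polynomial.C) *
          (Matrix.diagonal fun s : S =>
            algebraMap (Polynomial F) (RatFunc F) (Polynomial.X ^ ω s))⁻¹ *
          A.map ((algebraMap (Polynomial F) (RatFunc F)).comp Polynomial.C)) a (e b)).det ≠ 0 ∧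
    ∃ m : ℕ, ∃ p : Polynomial F, (∑ v : C, ω v.1) ≤ m ∧
      algebraMap (Polynomial F) (RatFunc F) (Polynomial.X ^ m) *
        (Matrix.of fun a b : S' =>
          (T'.map ((algebraMap (Polynomial F) (RatFunc F)).comp Polynomial.C) *
            (Matrix.diagonal fun s : S =>
              algebraMap (Polynomial F) (RatFunc F) (Polynomial.X ^ ω s))⁻¹ *
            A.map ((algebraMap (Polynomial F) (RatFunc F)).comp Polynomial.C)) a (e b)).det =
        algebraMap (Polynomial F) (RatFunc F) p ∧
      p.degree ≤ (m - ∑ v : C, ω v.1 : ℕ) ∧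
      p.coeff (m - ∑ v : C, ω v.1) = (Matrix.of fun a b : S' => T' a (e b).1).det := by
  classical
  set ψ := algebraMap (Polynomial F) (RatFunc F) with hψdef
  have hψinj : Function.Injective ψ := RatFunc.algebraMap_injective F
  have hXne : ∀ k : ℕ, ψ (Polynomial.X ^ k) ≠ 0 := by
    intro k h
    exact pow_ne_zero k Polynomial.X_ne_zero (hψinj (h.trans (_root_.map_zero ψ).symm))
  set m0 : ℕ := Finset.univ.sup ω with hm0def
  have hω : ∀ s : S, ω s ≤ m0 := fun s => Finset.le_sup (Finset.mem_univ s)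
  set G : Matrix S' S' (RatFunc F) := Matrix.of (fun a b : S' =>
    (T'.map (ψ.comp Polynomial.C) *
      (Matrix.diagonal fun s : S => ψ (Polynomial.X ^ ω s))⁻¹ *
      A.map (ψ.comp Polynomial.C)) a (e b)) with hGdef
  set P : Matrix S' S' (Polynomial F) := Matrix.of (fun a b : S' =>
    ∑ t : S, Polynomial.C (T' a t * A t (e b)) * Polynomial.X ^ (m0 - ω t)) with hPdef
  -- ω monotonicity on nonzero entries of A
  have hcol : ∀ (b : S') (t : S), A t (e b) ≠ 0 → ω ((e b : C) : S) ≤ ω t := by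
    intro b t hAt
    by_cases ht : t = ((e b : C) : S)
    · exact le_of_eq (by rw [ht])
    · exact le_of_lt (hA2 (e b) t ht hAt)
  -- degree bound on P entries
  have hdegP : ∀ a b : S', (P a b).degree ≤ ((m0 - ω ((e b : C) : S) : ℕ) : WithBot ℕ) := by
    intro a b
    refine (Polynomial.degree_sum_le _ _).trans (Finset.sup_le ?_)
    intro t _
    by_cases hAt : A t (e b) = 0
    · simp [hAt]
    · refine (Polynomial.degree_C_mul_X_pow_le _ _).trans ?_
      exact_mod_cast Nat.sub_le_sub_left (hcol b t hAt) m0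
  have hndegP : ∀ a b : S', (P a b).natDegree ≤ m0 - ω ((e b : C) : S) :=
    fun a b => Polynomial.natDegree_le_iff_degree_le.2 (hdegP a b)
  -- coefficient of P entries
  have hcoefP : ∀ a b : S', (P a b).coeff (m0 - ω ((e b : C) : S)) = T' a ((e b : C) : S) := by
    intro a b
    rw [show P a b = ∑ t : S, Polynomial.C (T' a t * A t (e b)) * Polynomial.X ^ (m0 - ω t) from rfl,
      Polynomial.finset_sum_coeff]
    rw [Finset.sum_eq_single ((e b : C) : S)]
    · simp [hA1 (e b)]
    · intro t _ hne
      by_cases hAt : A t (e b) = 0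
      · simp [hAt]
      · have h1 : ω ((e b : C) : S) < ω t := hA2 (e b) t hne hAt
        have h2 : ω t ≤ m0 := hω t
        rw [Polynomial.coeff_C_mul, Polynomial.coeff_X_pow, if_neg (by omega), mul_zero]
    · intro h; exact absurd (Finset.mem_univ _) h
  -- the matrix identity
  have hNinv : (Matrix.diagonal fun s : S => ψ (Polynomial.X ^ ω s))⁻¹ =
      Matrix.diagonal fun s : S => (ψ (Polynomial.X ^ ω s))⁻¹ := by
    apply Matrix.inv_eq_right_inv
    rw [Matrix.diagonal_mul_diagonal]
    rw [show (fun s : S => ψ (Polynomial.X ^ ω s) * (ψ (Polynomial.X ^ ω s))⁻¹) = fun _ => 1 from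
      funext fun s => mul_inv_cancel₀ (hXne _), Matrix.diagonal_one]
  have hentry : ∀ a b : S', ψ (Polynomial.X ^ m0) * G a b = ψ (P a b) := by
    intro a b
    show ψ (Polynomial.X ^ m0) *
      (T'.map (ψ.comp Polynomial.C) *
        (Matrix.diagonal fun s : S => ψ (Polynomial.X ^ ω s))⁻¹ *
        A.map (ψ.comp Polynomial.C)) a (e b) = ψ (P a b)
    rw [hNinv, Matrix.mul_apply]
    simp only [Matrix.mul_diagonal, Matrix.map_apply, RingHom.comp_apply]
    rw [show ψ (P a b) = ∑ t : S, ψ (Polynomial.C (T' a t * A t (e b)) *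
      Polynomial.X ^ (m0 - ω t)) from by rw [← _root_.map_sum]; rfl, Finset.mul_sum]
    refine Finset.sum_congr rfl fun t _ => ?_
    have key : ψ (Polynomial.X ^ m0) = ψ (Polynomial.X ^ (m0 - ω t)) * ψ (Polynomial.X ^ ω t) := by
      rw [← _root_.map_mul, ← pow_add, Nat.sub_add_cancel (hω t)]
    have hx : ψ Polynomial.X ≠ 0 := by simpa using hXne 1
    rw [_root_.map_mul, _root_.map_mul, key]
    simp only [_root_.map_mul]
    field_simp
  have hmatdet : ψ (Polynomial.X ^ m0) ^ Fintype.card S' * G.det = ψ P.det := by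
    have hm : ((ψ (Polynomial.X ^ m0)) • G : Matrix S' S' (RatFunc F)) = P.map ψ := by
      ext a b
      rw [Matrix.map_apply, Matrix.smul_apply, smul_eq_mul, hentry a b]
    have := congrArg Matrix.det hm
    have h2 : (P.map ⇑ψ).det = ψ P.det := by rw [RingHom.map_det, RingHom.mapMatrix_apply]
    rw [Matrix.det_smul, h2] at this
    exact this
  -- sums
  set W : ℕ := ∑ v : C, ω v.1 with hWdef
  have hW' : ∑ b : S', ω ((e b : C) : S) = W := Equiv.sum_comp e (fun v : C => ω v.1)
  set D : ℕ := ∑ b : S', (m0 - ω ((e b : C) : S)) with hDdef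
  have hDW : D + W = Fintype.card S' * m0 := by
    rw [← hW', ← Finset.sum_add_distrib,
      Finset.sum_congr rfl (fun b _ => Nat.sub_add_cancel (hω _)),
      Finset.sum_const, Finset.card_univ, smul_eq_mul]
  set m : ℕ := Fintype.card S' * m0 with hmdef
  have hWm : W ≤ m := by omega
  have hmW : m - W = D := by omega
  -- degree bound on det P
  have hdegdet : P.det.degree ≤ (D : WithBot ℕ) := by
    rw [Matrix.det_apply']
    refine (Polynomial.degree_sum_le _ _).trans (Finset.sup_le ?_)
    intro σ _
    refine (Polynomial.degree_mul_le _ _).trans ?_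
    have h2 : (∏ i : S', P (σ i) i).degree ≤ (D : WithBot ℕ) := by
      refine (Polynomial.degree_prod_le _ _).trans ?_
      rw [hDdef, Nat.cast_sum]
      exact Finset.sum_le_sum fun i _ => hdegP (σ i) i
    calc (((Equiv.Perm.sign σ : ℤ) : Polynomial F)).degree + (∏ i : S', P (σ i) i).degree
        ≤ 0 + (D : WithBot ℕ) := add_le_add (Polynomial.degree_intCast_le _) h2
      _ = (D : WithBot ℕ) := zero_add _
  -- coefficient of det P
  have hcoefdet : P.det.coeff D = (Matrix.of fun a b : S' => T' a (e b).1).det := by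
    rw [Matrix.det_apply', Polynomial.finset_sum_coeff, Matrix.det_apply']
    refine Finset.sum_congr rfl fun σ _ => ?_
    rw [← Polynomial.C_eq_intCast, Polynomial.coeff_C_mul, hDdef,
      coeff_prod_of_natDegree_le' _ _ _ (fun i _ => hndegP (σ i) i),
      Finset.prod_congr rfl fun i _ => hcoefP (σ i) i]
    simp [Matrix.of_apply]
  have hdetm : ψ (Polynomial.X ^ m) * G.det = ψ P.det := by
    rw [hmdef, mul_comm (Fintype.card S') m0, pow_mul, _root_.map_pow]
    exact hmatdet
  have hPne : P.det ≠ 0 := by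
    intro h
    apply hdet
    rw [← hcoefdet, h, Polynomial.coeff_zero]
  refine ⟨?_, m, P.det, hWm, hdetm, by rw [hmW]; exact hdegdet,
    by rw [hmW]; exact hcoefdet⟩
  intro hG0
  rw [hG0, mul_zero] at hdetm
  exact hPne (hψinj (hdetm.symm.trans (_root_.map_zero ψ).symm))
end

section
/- Let F be a field, κ ≥ 1, n ≥ 1, and let f ≠ 0 be a polynomial in x₁,…,x_n with coefficients in H_κ(F). Set ℓ' := 1 + min( 2⌈log₂(κ · s(f))⌉ , μ(f) ), where s(f) is the sparsity of f and μ(f) its monomial-weight. Then there exist b₁,…,b_n ∈ ℕ such that, with K := F(t) the field of rational functions in one variable t, the shifted polynomial σ(f) := f(x₁ + t^{b₁}, …, x_n + t^{b_n}), regarded as a polynomial over H_κ(K), is ℓ'-concentrated over H_κ(K). -/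
noncomputable section

open MvPolynomial

/-- The embedding `F → F(t)` (through `F[t]`). -/
def iFt (F : Type*) [Field F] : F →+* RatFunc F :=
  (algebraMap (Polynomial F) (RatFunc F)).comp Polynomial.C

/-- The coordinatewise embedding `H_κ(F) →+* H_κ(F(t))`. -/
def hadamardEmbedT (F : Type*) [Field F] (κ : ℕ) :
    (Fin κ → F) →+* (Fin κ → RatFunc F) :=
  Pi.ringHom fun c => (iFt F).comp (Pi.evalRingHom (fun _ => F) c)

/-- The polynomial `σ(f) = f(x₁ + t^{b₁}, …, x_n + t^{b_n})` over `H_κ(F(t))`. -/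
def shiftByPowers (F : Type*) [Field F] (κ n : ℕ) (b : Fin n → ℕ)
    (f : MvPolynomial (Fin n) (Fin κ → F)) :
    MvPolynomial (Fin n) (Fin κ → RatFunc F) :=
  MvPolynomial.eval₂ (MvPolynomial.C.comp (hadamardEmbedT F κ))
    (fun j => MvPolynomial.X j +
      MvPolynomial.C (fun _ => algebraMap (Polynomial F) (RatFunc F) (Polynomial.X ^ b j))) f

section AuxLemmas
open Finset

lemma X_add_one_pow {σ R : Type*} [CommSemiring R] (a : σ) (k : ℕ) :
    ((X a : MvPolynomial σ R) + 1) ^ k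
      = ∑ c ∈ Finset.range (k + 1), monomial (Finsupp.single a c) ((k.choose c : ℕ) : R) := by
  rw [add_pow]
  refine Finset.sum_congr rfl fun c _ => ?_
  rw [one_pow, mul_one, X_pow_eq_monomial]
  rw [show ((k.choose c : ℕ) : MvPolynomial σ R) = C ((k.choose c : ℕ) : R) by simp]
  rw [mul_comm, C_mul_monomial, mul_one]

lemma prod_X_add_one_pow {σ R : Type*} [CommSemiring R] [DecidableEq σ] (d : σ →₀ ℕ) :
    (∏ i ∈ d.support, ((X i : MvPolynomial σ R) + 1) ^ d i)
      = ∑ e ∈ Finset.Iic d,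
          monomial e ((∏ i ∈ d.support, (d i).choose (e i) : ℕ) : R) := by
  induction d using Finsupp.induction with
  | zero =>
      have : Finset.Iic (0 : σ →₀ ℕ) = {0} := by
        ext a; simp [Finset.mem_Iic, le_zero_iff]
      simp [this]
  | single_add a k rest hda hk ih =>
      have hra : rest a = 0 := Finsupp.notMem_support_iff.mp hda
      have hsupp : (Finsupp.single a k + rest).support = insert a rest.support := by
        rw [Finsupp.support_add_eq, Finsupp.support_single_ne_zero a hk, ← Finset.insert_eq]
        rw [Finsupp.support_single_ne_zero a hk]
        simpa using hda
      have hval : ∀ i, i ≠ a → (Finsupp.single a k + rest) i = rest i := by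
        intro i hi
        simp [Finsupp.single_apply, (Ne.symm hi)]
      have hvala : (Finsupp.single a k + rest) a = k := by simp [hra]
      rw [hsupp, Finset.prod_insert hda, hvala,
        Finset.prod_congr rfl fun i hi => by rw [hval i (fun h => hda (h ▸ hi))],
        ih, X_add_one_pow, Finset.sum_mul_sum, ← Finset.sum_product']
      refine Finset.sum_bij' (i := fun p _ => Finsupp.single a p.1 + p.2)
        (j := fun e' _ => (e' a, e'.erase a)) ?_ ?_ ?_ ?_ ?_
      · rintro ⟨c, e⟩ hp
        simp only [Finset.mem_product, Finset.mem_range, Finset.mem_Iic] at hp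
        rw [Finset.mem_Iic, Finsupp.le_def]
        intro i
        by_cases hia : i = a
        · subst hia
          have h0 : e i = 0 := Nat.le_zero.mp (hra ▸ hp.2 i)
          simp [h0, hra, Nat.lt_succ_iff.mp hp.1]
        · have := hp.2 i
          simp only [Finsupp.coe_add, Pi.add_apply, Finsupp.single_apply, Ne.symm hia,
            if_false, zero_add]
          exact this
      · intro e' he'
        rw [Finset.mem_Iic, Finsupp.le_def] at he'
        simp only [Finset.mem_product, Finset.mem_range, Finset.mem_Iic]
        constructor
        · have := he' a
          rw [hvala] at this
          omega
        · rw [Finsupp.le_def]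
          intro i
          by_cases hia : i = a
          · simp [hia, Finsupp.erase_same]
          · have := he' i
            rw [hval i hia] at this
            simpa [Finsupp.erase_ne hia] using this
      · rintro ⟨c, e⟩ hp
        simp only [Finset.mem_product, Finset.mem_range, Finset.mem_Iic] at hp
        have hea : e a = 0 := Nat.le_zero.mp ((Finsupp.le_def.mp hp.2 a).trans_eq hra)
        have h2 : (Finsupp.single a c + e).erase a = e := by
          ext i
          by_cases hia : i = a
          · simp [hia, Finsupp.erase_same, hea]
          · simp [Finsupp.erase_ne hia, Finsupp.single_apply, Ne.symm hia]
        simp [hea, h2]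
      · intro e' _
        simp [Finsupp.single_add_erase]
      · rintro ⟨c, e⟩ hp
        simp only [Finset.mem_product, Finset.mem_range, Finset.mem_Iic] at hp
        have hea : e a = 0 := Nat.le_zero.mp ((Finsupp.le_def.mp hp.2 a).trans_eq hra)
        have h1 : (Finsupp.single a c + e) a = c := by simp [hea]
        rw [monomial_mul]
        congr 1
        rw [← Nat.cast_mul]
        congr 1
        rw [Finset.prod_insert hda, hvala, h1]
        congr 1
        refine Finset.prod_congr rfl fun i hi => ?_
        have hia : i ≠ a := fun h => hda (h ▸ hi)
        rw [hval i hia]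
        congr 1
        simp [Finsupp.single_apply, Ne.symm hia]

lemma coeff_shift_one {σ R S : Type*} [CommSemiring R] [CommSemiring S] [DecidableEq σ]
    (ψ : R →+* S) (f : MvPolynomial σ R) (e : σ →₀ ℕ) :
    coeff e (eval₂ (C.comp ψ) (fun j => X j + 1) f)
      = ∑ d ∈ f.support, (∏ i ∈ e.support, (d i).choose (e i)) • ψ (coeff d f) := by
  conv_lhs => rw [← f.support_sum_monomial_coeff]
  rw [eval₂_sum, coeff_sum]
  refine Finset.sum_congr rfl fun d hd => ?_
  rw [eval₂_monomial, RingHom.comp_apply, Finsupp.prod, prod_X_add_one_pow, Finset.mul_sum, coeff_sum]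
  simp only [C_mul_monomial, coeff_monomial]
  rw [Finset.sum_ite_eq' (Finset.Iic d) e
    (fun e' => ψ (coeff d f) * ((∏ i ∈ d.support, (d i).choose (e' i) : ℕ) : S))]
  by_cases hle : e ≤ d
  · rw [if_pos (Finset.mem_Iic.mpr hle)]
    have hsub : e.support ⊆ d.support := by
      intro i hi
      rw [Finsupp.mem_support_iff] at hi ⊢
      have := Finsupp.le_def.mp hle i
      omega
    have hprod : (∏ i ∈ e.support, (d i).choose (e i)) = ∏ i ∈ d.support, (d i).choose (e i) := by
      refine Finset.prod_subset hsub fun i _ hni => ?_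
      rw [Finsupp.notMem_support_iff.mp hni, Nat.choose_zero_right]
    rw [hprod, nsmul_eq_mul, mul_comm]
  · rw [if_neg (fun h => hle (Finset.mem_Iic.mp h))]
    obtain ⟨i, hi⟩ : ∃ i, d i < e i := by
      by_contra h
      push_neg at h
      exact hle (Finsupp.le_def.mpr fun i => h i)
    have hie : i ∈ e.support := Finsupp.mem_support_iff.mpr (by omega)
    have : (∏ i ∈ e.support, (d i).choose (e i)) = 0 :=
      Finset.prod_eq_zero hie (Nat.choose_eq_zero_of_lt hi)
    rw [this, zero_smul]

lemma two_le_card_of_sum_eq_zero {A K : Type*} [Field K] {S : Finset A} {g : A → K}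
    (hg : ∀ d ∈ S, g d ≠ 0) (h : ∑ d ∈ S, g d = 0) (hne : S.Nonempty) : 2 ≤ S.card := by
  by_contra h2
  push_neg at h2
  have h1 : S.card = 1 := by
    have := Finset.card_pos.mpr hne
    omega
  obtain ⟨a, ha⟩ := Finset.card_eq_one.mp h1
  rw [ha, Finset.sum_singleton] at h
  exact hg a (by simp [ha]) h

lemma total_erase {σ : Type*} [DecidableEq σ] (d : σ →₀ ℕ) (i : σ) :
    ((d.erase i).sum fun _ v => v) + d i = d.sum fun _ v => v := by
  conv_rhs => rw [← Finsupp.single_add_erase i d]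
  rw [Finsupp.sum_add_index' (fun _ => rfl) (fun _ _ _ => rfl),
    Finsupp.sum_single_index rfl, add_comm]

lemma eq_zero_of_total_eq_zero {σ : Type*} {d : σ →₀ ℕ}
    (h : (d.sum fun _ v => v) = 0) : d = 0 := by
  rw [Finsupp.sum] at h
  ext j
  simp only [Finsupp.coe_zero, Pi.zero_apply]
  by_contra hj
  have hjs : j ∈ d.support := Finsupp.mem_support_iff.mpr hj
  have : d j ≤ ∑ a ∈ d.support, d a :=
    Finset.single_le_sum (f := fun a => d a) (fun _ _ => Nat.zero_le _) hjs
  omega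

lemma kernel_lb {σ K : Type*} [DecidableEq σ] [Field K] :
    ∀ (L D : ℕ) (S : Finset (σ →₀ ℕ)) (g : (σ →₀ ℕ) → K),
      (∑ d ∈ S, d.sum fun _ v => v) ≤ D →
      (∀ d ∈ S, g d ≠ 0) →
      (∀ e : σ →₀ ℕ, e.support.card ≤ L →
        ∑ d ∈ S, ((∏ j ∈ e.support, (d j).choose (e j) : ℕ) : K) * g d = 0) →
      S.Nonempty → 2 ^ (L + 1) ≤ S.card := by
  intro L
  induction L with
  | zero =>
      intro D S g _ hg hker hne
      have h0 := hker 0 (by simp)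
      simp only [Finsupp.support_zero, Finset.prod_empty, Nat.cast_one, one_mul] at h0
      simpa using two_le_card_of_sum_eq_zero hg h0 hne
  | succ L ihL =>
      intro D
      induction D with
      | zero =>
          intro S g hD hg hker hne
          exfalso
          have hall : ∀ d ∈ S, d = 0 := by
            intro d hd
            refine eq_zero_of_total_eq_zero (Nat.le_zero.mp ?_)
            exact le_trans (Finset.single_le_sum (f := fun d => d.sum fun _ v => v)
              (fun _ _ => Nat.zero_le _) hd) hD
          have hS : S = {0} := by
            obtain ⟨d, hd⟩ := hne
            have h0S : (0 : σ →₀ ℕ) ∈ S := hall d hd ▸ hd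
            ext x
            simp only [Finset.mem_singleton]
            exact ⟨fun hx => hall x hx, fun hx => hx ▸ h0S⟩
          have h0 := hker 0 (by simp)
          rw [hS, Finset.sum_singleton] at h0
          simp only [Finsupp.support_zero, Finset.prod_empty, Nat.cast_one, one_mul] at h0
          exact hg 0 (hS ▸ Finset.mem_singleton_self 0) h0
      | succ D ihD =>
          intro S g hD hg hker hne
          by_cases hall : ∀ d ∈ S, d = 0
          · exfalso
            have hS : S = {0} := by
              obtain ⟨d, hd⟩ := hne
              have h0S : (0 : σ →₀ ℕ) ∈ S := hall d hd ▸ hd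
              ext x
              simp only [Finset.mem_singleton]
              exact ⟨fun hx => hall x hx, fun hx => hx ▸ h0S⟩
            have h0 := hker 0 (by simp)
            rw [hS, Finset.sum_singleton] at h0
            simp only [Finsupp.support_zero, Finset.prod_empty, Nat.cast_one, one_mul] at h0
            exact hg 0 (hS ▸ Finset.mem_singleton_self 0) h0
          · push_neg at hall
            obtain ⟨d0, hd0S, hd0⟩ := hall
            obtain ⟨i, hd0i⟩ : ∃ i, d0 i ≠ 0 := by
              by_contra h
              push_neg at h
              exact hd0 (Finsupp.ext h)
            classical
            set π : (σ →₀ ℕ) → (σ →₀ ℕ) := fun d => d.erase i with hπdef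
            set T' := S.image π with hT'def
            set H : (σ →₀ ℕ) → K := fun eh => ∑ d ∈ S.filter (fun d => π d = eh), g d
              with hHdef
            have hπ0 : ∀ d : σ →₀ ℕ, π d i = 0 := fun d => Finsupp.erase_same
            have hπval : ∀ (d : σ →₀ ℕ) (j : σ), j ≠ i → π d j = d j := fun d j hj =>
              Finsupp.erase_ne hj
            have hbinom_π : ∀ (d e : σ →₀ ℕ), i ∉ e.support →
                (∏ j ∈ e.support, ((π d) j).choose (e j)) =
                  ∏ j ∈ e.support, (d j).choose (e j) := by
              intro d e hie
              exact Finset.prod_congr rfl fun j hj => by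
                rw [hπval d j (fun h => hie (h ▸ hj))]
            have hzero_term : ∀ (e : σ →₀ ℕ), i ∈ e.support → ∀ eh ∈ T',
                ((∏ j ∈ e.support, (eh j).choose (e j) : ℕ) : K) = 0 := by
              intro e hie eh heh
              obtain ⟨d, _, rfl⟩ := Finset.mem_image.mp heh
              have hei : e i ≠ 0 := Finsupp.mem_support_iff.mp hie
              have : (∏ j ∈ e.support, ((π d) j).choose (e j)) = 0 := by
                refine Finset.prod_eq_zero hie ?_
                rw [hπ0 d]
                exact Nat.choose_eq_zero_of_lt (Nat.pos_of_ne_zero hei)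
              rw [this, Nat.cast_zero]
            have hregroup : ∀ e : σ →₀ ℕ, i ∉ e.support → e.support.card ≤ L + 1 →
                ∑ eh ∈ T', ((∏ j ∈ e.support, (eh j).choose (e j) : ℕ) : K) * H eh = 0 := by
              intro e hie hcard
              have h1 := hker e hcard
              rw [← Finset.sum_fiberwise_of_maps_to (g := π) (t := T')
                (fun d hd => Finset.mem_image_of_mem π hd)
                (fun d => ((∏ j ∈ e.support, (d j).choose (e j) : ℕ) : K) * g d)] at h1
              rw [← h1]
              refine Finset.sum_congr rfl fun eh heh => ?_
              rw [Finset.mul_sum]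
              refine Finset.sum_congr rfl fun d hd => ?_
              have hπd : π d = eh := (Finset.mem_filter.mp hd).2
              rw [← hπd, hbinom_π d e hie]
            by_cases hHz : ∀ eh ∈ T', H eh = 0
            · -- top-layer case: pass to layer where the i-th exponent is maximal
              set c := S.sup (fun d => d i) with hcdef
              have hc1 : 1 ≤ c :=
                le_trans (Nat.one_le_iff_ne_zero.mpr hd0i)
                  (Finset.le_sup (f := fun d => d i) hd0S)
              set T := S.filter (fun d => d i = c) with hTdef
              have hTsub : T ⊆ S := Finset.filter_subset _ _
              have hTne : T.Nonempty := by
                obtain ⟨dm, hdm, hdm2⟩ := Finset.exists_mem_eq_sup S hne (fun d => d i)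
                exact ⟨dm, Finset.mem_filter.mpr ⟨hdm, hdm2.symm⟩⟩
              have hinj : ∀ d ∈ T, ∀ d' ∈ T, π d = π d' → d = d' := by
                intro d hd d' hd' hπeq
                have hdc := (Finset.mem_filter.mp hd).2
                have hdc' := (Finset.mem_filter.mp hd').2
                ext j
                by_cases hj : j = i
                · rw [hj, hdc, hdc']
                · rw [← hπval d j hj, ← hπval d' j hj, hπeq]
              set S2 := T.image π with hS2def
              set g2 : (σ →₀ ℕ) → K := fun eh => ∑ d ∈ T.filter (fun d' => π d' = eh), g d
                with hg2def
              have hfib : ∀ d ∈ T, T.filter (fun d' => π d' = π d) = {d} := by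
                intro d hd
                ext d'
                simp only [Finset.mem_filter, Finset.mem_singleton]
                constructor
                · rintro ⟨hd', heq⟩
                  exact hinj d' hd' d hd heq
                · rintro rfl
                  exact ⟨hd, rfl⟩
              have hg2 : ∀ d ∈ T, g2 (π d) = g d := by
                intro d hd
                rw [hg2def]
                simp only
                rw [hfib d hd, Finset.sum_singleton]
              have hg2ne : ∀ eh ∈ S2, g2 eh ≠ 0 := by
                intro eh heh
                obtain ⟨d, hd, rfl⟩ := Finset.mem_image.mp heh
                rw [hg2 d hd]
                exact hg d (hTsub hd)
              have hS2ne : S2.Nonempty := hTne.image π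
              have hS2T' : S2 ⊆ T' := Finset.image_subset_image hTsub
              have hker2 : ∀ e : σ →₀ ℕ, e.support.card ≤ L →
                  ∑ eh ∈ S2, ((∏ j ∈ e.support, (eh j).choose (e j) : ℕ) : K) * g2 eh = 0 := by
                intro e hcard
                by_cases hie : i ∈ e.support
                · refine Finset.sum_eq_zero fun eh heh => ?_
                  rw [hzero_term e hie eh (hS2T' heh), zero_mul]
                · set e' := e + Finsupp.single i c with he'def
                  have hdisj : Disjoint e.support (Finsupp.single i c).support := by
                    rw [Finsupp.support_single_ne_zero i (by omega)]
                    exact Finset.disjoint_singleton_right.mpr hie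
                  have hsupp' : e'.support = insert i e.support := by
                    rw [he'def, Finsupp.support_add_eq hdisj,
                      Finsupp.support_single_ne_zero i (by omega), Finset.union_comm,
                      ← Finset.insert_eq]
                  have hcard' : e'.support.card ≤ L + 1 := by
                    rw [hsupp', Finset.card_insert_of_notMem hie]
                    omega
                  have hval' : ∀ j ∈ e.support, e' j = e j := by
                    intro j hj
                    have hji : j ≠ i := fun h => hie (h ▸ hj)
                    rw [he'def]
                    simp [Finsupp.single_apply, Ne.symm hji]
                  have hvi : e' i = c := by
                    rw [he'def]
                    simp [Finsupp.notMem_support_iff.mp hie]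
                  have hsplit : ∀ d : σ →₀ ℕ, (∏ j ∈ e'.support, (d j).choose (e' j))
                      = (d i).choose c * ∏ j ∈ e.support, (d j).choose (e j) := by
                    intro d
                    rw [hsupp', Finset.prod_insert hie, hvi]
                    congr 1
                    exact Finset.prod_congr rfl fun j hj => by rw [hval' j hj]
                  have h1 := hker e' hcard'
                  have hdrop : ∑ d ∈ T, ((∏ j ∈ e'.support, (d j).choose (e' j) : ℕ) : K) * g d
                      = ∑ d ∈ S, ((∏ j ∈ e'.support, (d j).choose (e' j) : ℕ) : K) * g d := by
                    rw [hTdef]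
                    refine Finset.sum_filter_of_ne fun d hd hne0 => ?_
                    by_contra hdc
                    have hle : d i ≤ c := Finset.le_sup (f := fun d => d i) hd
                    have : (d i).choose c = 0 := Nat.choose_eq_zero_of_lt (by omega)
                    rw [hsplit d, this, zero_mul, Nat.cast_zero, zero_mul] at hne0
                    exact hne0 rfl
                  have h2 : ∑ d ∈ T, ((∏ j ∈ e.support, (d j).choose (e j) : ℕ) : K) * g d = 0 := by
                    rw [← h1, ← hdrop]
                    refine Finset.sum_congr rfl fun d hd => ?_
                    have hdc : d i = c := (Finset.mem_filter.mp hd).2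
                    rw [hsplit d, hdc, Nat.choose_self, one_mul]
                  rw [hS2def, Finset.sum_image hinj]
                  rw [← h2]
                  refine Finset.sum_congr rfl fun d hd => ?_
                  rw [hbinom_π d e hie, hg2 d hd]
              have h2L := ihL (∑ eh ∈ S2, eh.sum fun _ v => v) S2 g2 le_rfl hg2ne hker2 hS2ne
              have h2each : ∀ eh ∈ S2, 2 ≤ (S.filter fun d => π d = eh).card := by
                intro eh heh
                obtain ⟨d, hdT, rfl⟩ := Finset.mem_image.mp heh
                have hdfib : d ∈ S.filter fun d' => π d' = π d :=
                  Finset.mem_filter.mpr ⟨hTsub hdT, rfl⟩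
                by_contra hlt
                push_neg at hlt
                have hcard1 : (S.filter fun d' => π d' = π d).card = 1 := by
                  have := Finset.card_pos.mpr ⟨d, hdfib⟩
                  omega
                obtain ⟨x, hx⟩ := Finset.card_eq_one.mp hcard1
                have hxS : x ∈ S := by
                  have : x ∈ S.filter fun d' => π d' = π d := by
                    rw [hx]
                    exact Finset.mem_singleton_self x
                  exact (Finset.mem_filter.mp this).1
                have hHval : H (π d) = g x := by
                  rw [hHdef]
                  simp only
                  rw [hx, Finset.sum_singleton]
                exact hg x hxS (hHval ▸ hHz (π d) (hS2T' heh))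
              have hfibers : S.card = ∑ eh ∈ T', (S.filter fun d => π d = eh).card :=
                Finset.card_eq_sum_card_fiberwise (fun d hd => Finset.mem_image_of_mem π hd)
              calc 2 ^ (L + 1 + 1) = 2 * 2 ^ (L + 1) := by ring
                _ ≤ 2 * S2.card := by omega
                _ = ∑ _eh ∈ S2, 2 := by rw [Finset.sum_const, smul_eq_mul, mul_comm]
                _ ≤ ∑ eh ∈ S2, (S.filter fun d => π d = eh).card := Finset.sum_le_sum h2each
                _ ≤ ∑ eh ∈ T', (S.filter fun d => π d = eh).card :=
                    Finset.sum_le_sum_of_subset hS2T'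
                _ = S.card := hfibers.symm
            · -- merging case: project away the i-th coordinate
              push_neg at hHz
              obtain ⟨eh0, heh0T', hHeh0⟩ := hHz
              set S1 := T'.filter (fun eh => H eh ≠ 0) with hS1def
              have hS1ne : S1.Nonempty := ⟨eh0, Finset.mem_filter.mpr ⟨heh0T', hHeh0⟩⟩
              have hS1g : ∀ eh ∈ S1, H eh ≠ 0 := fun eh heh => (Finset.mem_filter.mp heh).2
              have hker1 : ∀ e : σ →₀ ℕ, e.support.card ≤ L + 1 →
                  ∑ eh ∈ S1, ((∏ j ∈ e.support, (eh j).choose (e j) : ℕ) : K) * H eh = 0 := by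
                intro e hcard
                by_cases hie : i ∈ e.support
                · refine Finset.sum_eq_zero fun eh heh => ?_
                  rw [hzero_term e hie eh (Finset.filter_subset _ _ heh), zero_mul]
                · rw [hS1def]
                  rw [Finset.sum_filter_of_ne fun eh heh hne0 => ?_]
                  · exact hregroup e hie hcard
                  · intro hH0
                    rw [hH0, mul_zero] at hne0
                    exact hne0 rfl
              have hmeas : (∑ eh ∈ S1, eh.sum fun _ v => v) ≤ D := by
                have h1 : (∑ eh ∈ S1, eh.sum fun _ v => v) ≤ ∑ eh ∈ T', eh.sum fun _ v => v :=
                  Finset.sum_le_sum_of_subset (Finset.filter_subset _ _)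
                have h2 : (∑ eh ∈ T', eh.sum fun _ v => v)
                    ≤ ∑ d ∈ S, (π d).sum fun _ v => v := by
                  rw [← Finset.sum_fiberwise_of_maps_to (g := π) (t := T')
                    (fun d hd => Finset.mem_image_of_mem π hd)
                    (fun d => (π d).sum fun _ v => v)]
                  refine Finset.sum_le_sum fun eh heh => ?_
                  obtain ⟨d, hd, rfl⟩ := Finset.mem_image.mp heh
                  have hdfib : d ∈ S.filter (fun d' => π d' = π d) :=
                    Finset.mem_filter.mpr ⟨hd, rfl⟩
                  exact Finset.single_le_sum (f := fun d' => (π d').sum fun _ v => v)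
                    (fun _ _ => Nat.zero_le _) hdfib
                have h5 : (∑ d ∈ S, ((π d).sum fun _ v => v)) + ∑ d ∈ S, d i
                    = ∑ d ∈ S, d.sum fun _ v => v := by
                  rw [← Finset.sum_add_distrib]
                  exact Finset.sum_congr rfl fun d _ => total_erase d i
                have h6 : 1 ≤ ∑ d ∈ S, d i :=
                  le_trans (Nat.one_le_iff_ne_zero.mpr hd0i)
                    (Finset.single_le_sum (f := fun d => d i) (fun _ _ => Nat.zero_le _) hd0S)
                omega
              have hmain := ihD S1 H hmeas hS1g hker1 hS1ne
              calc 2 ^ (L + 1 + 1) ≤ S1.card := hmain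
                _ ≤ T'.card := Finset.card_le_card (Finset.filter_subset _ _)
                _ ≤ S.card := Finset.card_image_le

end AuxLemmas

/-- **Sparse polynomials can be shifted to low-support concentration.**
For a nonzero `f` over `H_κ(F)` and `ℓ' := 1 + min(2⌈log₂(κ·s(f))⌉, μ(f))`, there are
exponents `b₁,…,b_n ∈ ℕ` such that `σ(f) = f(x + t^b)`, viewed over `H_κ(F(t))`, is
`ℓ'`-concentrated: every coefficient of `σ(f)` lies in the `F(t)`-span of the
coefficients at exponents of support-weight `< ℓ'`. -/
theorem sparse_shift_concentration {F : Type*} [Field F] (κ n : ℕ)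
    (hκ : 1 ≤ κ) (hn : 1 ≤ n)
    (f : MvPolynomial (Fin n) (Fin κ → F)) (hf : f ≠ 0)
    (ℓ' : ℕ)
    (hℓ' : ℓ' = 1 + min (2 * Nat.clog 2 (κ * f.support.card))
      (f.support.sup fun e => e.support.card)) :
    ∃ b : Fin n → ℕ, ∀ e : Fin n →₀ ℕ,
      MvPolynomial.coeff e (shiftByPowers F κ n b f) ∈
        Submodule.span (RatFunc F)
          {v | ∃ e' : Fin n →₀ ℕ, e'.support.card < ℓ' ∧
            MvPolynomial.coeff e' (shiftByPowers F κ n b f) = v} := by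
  classical
  refine ⟨fun _ => 0, fun e => ?_⟩
  have hshift : shiftByPowers F κ n (fun _ => 0) f
      = eval₂ (MvPolynomial.C.comp (hadamardEmbedT F κ)) (fun j => X j + 1) f := by
    unfold shiftByPowers
    simp only [pow_zero, map_one]
    rfl
  have hcoeff : ∀ e' : Fin n →₀ ℕ, coeff e' (shiftByPowers F κ n (fun _ => 0) f)
      = ∑ d ∈ f.support, (∏ j ∈ e'.support, (d j).choose (e' j)) •
          hadamardEmbedT F κ (coeff d f) := by
    intro e'
    rw [hshift, coeff_shift_one]
  set L2 := 2 * Nat.clog 2 (κ * f.support.card) with hL2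
  set μ := f.support.sup fun e => e.support.card with hμ
  rcases le_total L2 μ with hcase | hcase
  · -- hard case : ℓ' = 1 + L2
    have hℓ'' : ℓ' = 1 + L2 := by rw [hℓ', min_eq_left hcase]
    by_contra hv
    obtain ⟨φ, hφv, hφmap⟩ := Submodule.exists_dual_map_eq_bot_of_notMem hv inferInstance
    have hφ0 : ∀ u ∈ Submodule.span (RatFunc F)
        {v | ∃ e' : Fin n →₀ ℕ, e'.support.card < ℓ' ∧
          coeff e' (shiftByPowers F κ n (fun _ => 0) f) = v}, φ u = 0 := by
      intro u hu
      have : φ u ∈ Submodule.map φ _ := Submodule.mem_map_of_mem hu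
      rw [hφmap] at this
      exact (Submodule.mem_bot _).mp this
    set γ : (Fin n →₀ ℕ) → RatFunc F := fun d => φ (hadamardEmbedT F κ (coeff d f)) with hγ
    have hφcoeff : ∀ e' : Fin n →₀ ℕ, φ (coeff e' (shiftByPowers F κ n (fun _ => 0) f))
        = ∑ d ∈ f.support, ((∏ j ∈ e'.support, (d j).choose (e' j) : ℕ) : RatFunc F) * γ d := by
      intro e'
      rw [hcoeff e', map_sum]
      refine Finset.sum_congr rfl fun d _ => ?_
      rw [map_nsmul, nsmul_eq_mul]
    have hker : ∀ e' : Fin n →₀ ℕ, e'.support.card ≤ L2 →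
        ∑ d ∈ f.support, ((∏ j ∈ e'.support, (d j).choose (e' j) : ℕ) : RatFunc F) * γ d = 0 := by
      intro e' h
      rw [← hφcoeff]
      exact hφ0 _ (Submodule.subset_span ⟨e', by omega, rfl⟩)
    set S := f.support.filter (fun d => γ d ≠ 0) with hS
    by_cases hSne : S.Nonempty
    · have hkerS : ∀ e' : Fin n →₀ ℕ, e'.support.card ≤ L2 →
          ∑ d ∈ S, ((∏ j ∈ e'.support, (d j).choose (e' j) : ℕ) : RatFunc F) * γ d = 0 := by
        intro e' h
        rw [hS, Finset.sum_filter_of_ne fun d _ hne0 => ?_]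
        · exact hker e' h
        · intro h0
          rw [h0, mul_zero] at hne0
          exact hne0 rfl
      have hbig := kernel_lb L2 (∑ d ∈ S, d.sum fun _ v => v) S γ le_rfl
        (fun d hd => (Finset.mem_filter.mp hd).2) hkerS hSne
      have hcard : S.card ≤ f.support.card := Finset.card_filter_le _ _
      have hsle : κ * f.support.card ≤ 2 ^ Nat.clog 2 (κ * f.support.card) :=
        Nat.le_pow_clog one_lt_two _
      have h2 : f.support.card ≤ κ * f.support.card := Nat.le_mul_of_pos_left _ hκ
      have h3 : 2 ^ Nat.clog 2 (κ * f.support.card) ≤ 2 ^ L2 :=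
        Nat.pow_le_pow_right (by norm_num) (by omega)
      have hps : 2 ^ (L2 + 1) = 2 ^ L2 * 2 := pow_succ 2 L2
      have hpos : 1 ≤ 2 ^ L2 := Nat.one_le_two_pow
      omega
    · have hγ0 : ∀ d ∈ f.support, γ d = 0 := by
        intro d hd
        by_contra h
        exact hSne ⟨d, Finset.mem_filter.mpr ⟨hd, h⟩⟩
      refine absurd ?_ hφv
      rw [hφcoeff e]
      exact Finset.sum_eq_zero fun d hd => by rw [hγ0 d hd, mul_zero]
  · -- easy case : ℓ' = 1 + μ, every occurring exponent has small support
    have hℓ'' : ℓ' = 1 + μ := by rw [hℓ', min_eq_right hcase]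
    by_cases h0 : coeff e (shiftByPowers F κ n (fun _ => 0) f) = 0
    · rw [h0]
      exact Submodule.zero_mem _
    · have hex : ∃ d ∈ f.support,
          (∏ j ∈ e.support, (d j).choose (e j)) • hadamardEmbedT F κ (coeff d f) ≠ 0 := by
        by_contra h
        push_neg at h
        exact h0 ((hcoeff e).trans (Finset.sum_eq_zero h))
      obtain ⟨d, hd, hterm⟩ := hex
      have hbin : (∏ j ∈ e.support, (d j).choose (e j)) ≠ 0 := fun h => hterm (by
        rw [h, zero_smul])
      have hsub : e.support ⊆ d.support := by
        intro j hj
        have hj' := Finsupp.mem_support_iff.mp hj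
        rw [Finsupp.mem_support_iff]
        have hne0 := Finset.prod_ne_zero_iff.mp hbin j hj
        have hle : e j ≤ d j := by
          by_contra hh
          push_neg at hh
          exact hne0 (Nat.choose_eq_zero_of_lt hh)
        omega
      have hcard : e.support.card ≤ μ :=
        le_trans (Finset.card_le_card hsub)
          (Finset.le_sup (f := fun e : Fin n →₀ ℕ => e.support.card) hd)
      exact Submodule.subset_span ⟨e, by omega, rfl⟩


end
end

section
/- Let F be a field, κ ≥ 1, n ≥ 1, r ≥ 1. Let f₁,…,f_κ ∈ F[x₁,…,x_n], and suppose given points a_{i,j} ∈ Fⁿ for i ∈ {1,…,κ}, j ∈ {1,…,r} such that for each i there exists j with f_i(a_{i,j}) ≠ 0. Let β_{i,j} ∈ F (i ∈ {1,…,κ}, j ∈ {1,…,r}) be κr pairwise distinct elements, and for each (i,j) define the univariate polynomial g_{i,j}(u) := ∏_{(p,q) ≠ (i,j)} (u − β_{p,q}) ∈ F[u]. Then for every i ∈ {1,…,κ}, the bivariate polynomial f_i( v · Σ_{p,q} g_{p,q}(u) · a_{p,q} ) ∈ F[u,v] — obtained by substituting, for each variable index m, x_m ↦ v · Σ_{p,q}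 g_{p,q}(u) · (a_{p,q})_m — is nonzero. -/
/-- **Combining hitting points into a single curve.**  Given polynomials `f₁,…,f_κ`,
points `a_{i,j} ∈ Fⁿ` such that each `fᵢ` is nonzero at some `a_{i,j}`, and `κr`
pairwise distinct field elements `β_{i,j}` with interpolation polynomials
`g_{i,j}(u) = ∏_{(p,q) ≠ (i,j)} (u − β_{p,q})`, the bivariate polynomial
`fᵢ(v · Σ_{p,q} g_{p,q}(u) · a_{p,q})` (substituting `x_m ↦ v·Σ g_{p,q}(u)·(a_{p,q})_m`)
is nonzero for every `i`.  Here `u = X 0` and `v = X 1` in `F[u,v]`. -/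
theorem combined_curve_nonzero {F : Type*} [Field F] (κ n r : ℕ)
    (hκ : 1 ≤ κ) (hn : 1 ≤ n) (hr : 1 ≤ r)
    (f : Fin κ → MvPolynomial (Fin n) F)
    (a : Fin κ → Fin r → Fin n → F)
    (hf : ∀ i, ∃ j, MvPolynomial.eval (a i j) (f i) ≠ 0)
    (β : Fin κ → Fin r → F)
    (hβ : Function.Injective fun p : Fin κ × Fin r => β p.1 p.2) :
    ∀ i : Fin κ,
      MvPolynomial.aeval (fun m : Fin n =>
        (MvPolynomial.X 1 : MvPolynomial (Fin 2) F) *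
          ∑ pq : Fin κ × Fin r,
            (∏ pq' ∈ Finset.univ.filter fun x : Fin κ × Fin r => x ≠ pq,
              (MvPolynomial.X 0 - MvPolynomial.C (β pq'.1 pq'.2))) *
            MvPolynomial.C (a pq.1 pq.2 m)) (f i) ≠ 0 := by
  intro i
  obtain ⟨j, hj⟩ := hf i
  set c : F := ∏ pq' ∈ Finset.univ.filter fun x : Fin κ × Fin r => x ≠ (i, j),
    (β i j - β pq'.1 pq'.2) with hc
  have hc0 : c ≠ 0 := by
    rw [hc]
    apply Finset.prod_ne_zero_iff.mpr
    intro pq' hpq' h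
    rw [sub_eq_zero] at h
    exact (Finset.mem_filter.mp hpq').2 (hβ h.symm)
  set φ : MvPolynomial (Fin 2) F →ₐ[F] F := MvPolynomial.aeval ![β i j, c⁻¹] with hφ
  intro hcontra
  apply hj
  have key : φ (MvPolynomial.aeval (fun m : Fin n =>
        (MvPolynomial.X 1 : MvPolynomial (Fin 2) F) *
          ∑ pq : Fin κ × Fin r,
            (∏ pq' ∈ Finset.univ.filter fun x : Fin κ × Fin r => x ≠ pq,
              (MvPolynomial.X 0 - MvPolynomial.C (β pq'.1 pq'.2))) *
            MvPolynomial.C (a pq.1 pq.2 m)) (f i)) = MvPolynomial.eval (a i j) (f i) := by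
    rw [show φ (MvPolynomial.aeval _ (f i)) = (φ.comp (MvPolynomial.aeval _)) (f i) from rfl,
      MvPolynomial.comp_aeval]
    have hpoint : ∀ m : Fin n, φ ((MvPolynomial.X 1 : MvPolynomial (Fin 2) F) *
          ∑ pq : Fin κ × Fin r,
            (∏ pq' ∈ Finset.univ.filter fun x : Fin κ × Fin r => x ≠ pq,
              (MvPolynomial.X 0 - MvPolynomial.C (β pq'.1 pq'.2))) *
            MvPolynomial.C (a pq.1 pq.2 m)) = a i j m := by
      intro m
      rw [map_mul, map_sum]
      have hterm : ∀ pq : Fin κ × Fin r, φ ((∏ pq' ∈ Finset.univ.filter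
            fun x : Fin κ × Fin r => x ≠ pq,
              (MvPolynomial.X 0 - MvPolynomial.C (β pq'.1 pq'.2))) *
            MvPolynomial.C (a pq.1 pq.2 m)) =
          (∏ pq' ∈ Finset.univ.filter fun x : Fin κ × Fin r => x ≠ pq,
              (β i j - β pq'.1 pq'.2)) * a pq.1 pq.2 m := by
        intro pq
        simp [hφ, map_prod]
      rw [Finset.sum_congr rfl fun pq _ => hterm pq]
      rw [Finset.sum_eq_single (i, j)]
      · have : φ (MvPolynomial.X 1) = c⁻¹ := by simp [hφ]
        rw [this, ← hc, ← mul_assoc, inv_mul_cancel₀ hc0, one_mul]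
      · intro pq _ hpq
        have : (i, j) ∈ Finset.univ.filter fun x : Fin κ × Fin r => x ≠ pq := by
          simp [Ne.symm hpq]
        rw [Finset.prod_eq_zero this (by ring), zero_mul]
      · intro h; exact absurd (Finset.mem_univ _) h
    rw [funext hpoint]
    rfl
  rw [← key, hcontra, map_zero]
end

section
/- Let F be a field, κ ≥ 1, n ≥ 1, and let z₁,…,z_n ∈ F^κ, where F^κ carries the coordinatewise (Hadamard) product ⋆. For e ∈ ℕⁿ write z^e := z₁^{e₁} ⋆ ⋯ ⋆ z_n^{e_n} (with z^0 the all-ones vector). Then the F-linear span of { z^e : e ∈ ℕⁿ } equals the F-linear span of { z^e : e ∈ ℕⁿ, s(e) ≤ ⌊log₂ κ⌋ }. -/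
/-- **Low-support span of Hadamard monomials.**  For vectors `z₁,…,z_n ∈ F^κ` with the
coordinatewise product, the `F`-span of all Hadamard monomials `z^e = z₁^{e₁} ⋆ ⋯ ⋆ z_n^{e_n}`
equals the `F`-span of those with support-weight `s(e) ≤ ⌊log₂ κ⌋`. -/
theorem span_hadamard_monomials_low_support {F : Type*} [Field F] (κ n : ℕ)
    (hκ : 1 ≤ κ) (hn : 1 ≤ n) (z : Fin n → Fin κ → F) :
    Submodule.span F (Set.range fun e : Fin n → ℕ => ∏ i : Fin n, z i ^ e i) =
      Submodule.span F {v : Fin κ → F | ∃ e : Fin n → ℕ,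
        (Finset.univ.filter fun i => e i ≠ 0).card ≤ Nat.log 2 κ ∧
        (∏ i : Fin n, z i ^ e i) = v} := by
  classical
  set m : (Fin n → ℕ) → (Fin κ → F) := fun e => ∏ i, z i ^ e i with hm
  have m_add : ∀ e f : Fin n → ℕ, m (e + f) = m e * m f := by
    intro e f
    simp [m, pow_add, Finset.prod_mul_distrib]
  set L := Submodule.span F {v : Fin κ → F | ∃ e : Fin n → ℕ,
        (Finset.univ.filter fun i => e i ≠ 0).card ≤ Nat.log 2 κ ∧ m e = v} with hL
  have key : ∀ s : ℕ, ∀ e : Fin n → ℕ,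
      (Finset.univ.filter fun i => e i ≠ 0).card ≤ s → m e ∈ L := by
    intro s
    induction s with
    | zero =>
      intro e he
      exact Submodule.subset_span ⟨e, le_trans he (Nat.zero_le _), rfl⟩
    | succ s ih =>
      intro e he
      by_cases hlow : (Finset.univ.filter fun i => e i ≠ 0).card ≤ Nat.log 2 κ
      · exact Submodule.subset_span ⟨e, hlow, rfl⟩
      push_neg at hlow
      set S := Finset.univ.filter fun i => e i ≠ 0 with hS
      have hcard : κ < 2 ^ S.card := by
        calc κ < 2 ^ (Nat.log 2 κ + 1) := Nat.lt_pow_succ_log_self (by norm_num) κ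
        _ ≤ 2 ^ S.card := Nat.pow_le_pow_right (by norm_num) hlow
      set r : Finset (Fin n) → (Fin n → ℕ) := fun T i => if i ∈ T then e i else 0 with hr
      set v : {T // T ∈ S.powerset} → (Fin κ → F) := fun T => m (r T.1) with hv
      have hnli : ¬ LinearIndependent F v := by
        intro h
        have h1 := h.fintype_card_le_finrank
        rw [Module.finrank_pi, Fintype.card_coe, Finset.card_powerset,
          Fintype.card_fin] at h1
        omega
      obtain ⟨g, hgsum, T₁, hT₁⟩ := Fintype.not_linearIndependent_iff.mp hnli
      set B : Finset {T // T ∈ S.powerset} := Finset.univ.filter fun T => g T ≠ 0 with hB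
      obtain ⟨T₀, hT₀B, hmax⟩ := Finset.exists_max_image B (fun T => T.1.card)
        ⟨T₁, by simp [hB, hT₁]⟩
      have hg0 : g T₀ ≠ 0 := by simpa [hB] using hT₀B
      have hT₀sub : T₀.1 ⊆ S := Finset.mem_powerset.mp T₀.2
      set w := m (r (S \ T₀.1)) with hw
      have hrel : ∑ T, g T • (w * v T) = 0 := by
        have h2 := congrArg (fun x => w * x) hgsum
        simpa [Finset.mul_sum, mul_smul_comm] using h2
      -- the T₀ term recovers m e
      have hre : r (S \ T₀.1) + r T₀.1 = e := by
        funext i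
        by_cases hiS : i ∈ S
        · by_cases hiT : i ∈ T₀.1 <;>
            simp [hr, Finset.mem_sdiff, hiS, hiT]
        · have he0 : e i = 0 := by
            by_contra h'
            exact hiS (by simp [hS, h'])
          simp [hr, Finset.mem_sdiff, hiS, he0]
      have hwv : w * v T₀ = m e := by
        have h3 : w * v T₀ = m (r (S \ T₀.1) + r T₀.1) := (m_add _ _).symm
        rw [h3, hre]
      -- all other (nonzero) terms lie in L
      have hterm : ∀ T : {T // T ∈ S.powerset}, T ≠ T₀ → g T • (w * v T) ∈ L := by
        intro T hTne
        by_cases hgT : g T = 0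
        · simp [hgT]
        have hTB : T ∈ B := by simp [hB, hgT]
        have hTsub : T.1 ⊆ S := Finset.mem_powerset.mp T.2
        have hwvT : w * v T = m (r (S \ T₀.1) + r T.1) := (m_add _ _).symm
        -- strictness: T.1 ∪ (S \ T₀.1) ⊊ S
        have hsubU : T.1 ∪ (S \ T₀.1) ⊆ S := by
          intro i hi
          rcases Finset.mem_union.mp hi with h' | h'
          · exact hTsub h'
          · exact (Finset.mem_sdiff.mp h').1
        have hne : T.1 ∪ (S \ T₀.1) ≠ S := by
          intro hEq
          have hT₀T : T₀.1 ⊆ T.1 := by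
            intro i hi
            have hiS : i ∈ S := hT₀sub hi
            have : i ∈ T.1 ∪ (S \ T₀.1) := by rw [hEq]; exact hiS
            rcases Finset.mem_union.mp this with h' | h'
            · exact h'
            · exact absurd (Finset.mem_sdiff.mp h').2 (not_not_intro hi)
          have hssub : T₀.1 ⊂ T.1 :=
            hT₀T.ssubset_of_ne (fun h' => hTne (Subtype.ext h'.symm))
          have := hmax T hTB
          have := Finset.card_lt_card hssub
          omega
        have hcardlt : (T.1 ∪ (S \ T₀.1)).card < S.card :=
          Finset.card_lt_card (hsubU.ssubset_of_ne hne)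
        have hsupp : (Finset.univ.filter fun i => (r (S \ T₀.1) + r T.1) i ≠ 0).card ≤ s := by
          have hss : (Finset.univ.filter fun i => (r (S \ T₀.1) + r T.1) i ≠ 0)
              ⊆ T.1 ∪ (S \ T₀.1) := by
            intro i hi
            simp only [Finset.mem_filter, Finset.mem_univ, true_and, Pi.add_apply, hr] at hi
            rw [Finset.mem_union]
            by_contra hcon
            push_neg at hcon
            simp [hcon.1, hcon.2, Finset.mem_sdiff] at hi
          have := Finset.card_le_card hss
          omega
        have := ih _ hsupp
        rw [hwvT]
        exact Submodule.smul_mem L _ this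
      -- assemble
      have hsplit := Finset.add_sum_erase Finset.univ (fun T => g T • (w * v T))
        (Finset.mem_univ T₀)
      have hmemL : g T₀ • m e ∈ L := by
        have hzero : g T₀ • (w * v T₀)
            + ∑ T ∈ Finset.univ.erase T₀, g T • (w * v T) = 0 := by
          rw [hsplit]; exact hrel
        have hneg : g T₀ • (w * v T₀)
            = -∑ T ∈ Finset.univ.erase T₀, g T • (w * v T) :=
          eq_neg_of_add_eq_zero_left hzero
        rw [← hwv, hneg]
        refine Submodule.neg_mem L (Submodule.sum_mem L fun T hT => ?_)
        exact hterm T (Finset.ne_of_mem_erase hT)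
      have : m e = (g T₀)⁻¹ • (g T₀ • m e) := by
        rw [smul_smul, inv_mul_cancel₀ hg0, one_smul]
      rw [this]
      exact Submodule.smul_mem L _ hmemL
  apply le_antisymm
  · rw [Submodule.span_le]
    rintro _ ⟨e, rfl⟩
    exact key _ e le_rfl
  · apply Submodule.span_mono
    rintro x ⟨e, _, hex⟩
    exact ⟨e, hex⟩
end

section
/- Let F be a field whose characteristic is zero or greater than d, let κ ≥ 1, n ≥ 1, and let z₁,…,z_n ∈ H_κ(F). Let D' := (1 + z₁x₁ + ⋯ + z_nx_n)^d, a polynomial in x₁,…,x_n with coefficients in H_κ(F), where 1 is the all-ones vector. Then every coefficient of D' lies in the F-linear span of { Coef(e)(D') : e ∈ ℕⁿ, s(e) ≤ ⌊log₂ κ⌋ }; that is, D' is (⌊log₂ κ⌋ + 1)-concentrated over H_κ(F). -/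
open Finset MvPolynomial
open scoped Nat

namespace DiagConc

variable {F : Type*} [Field F] {κ n : ℕ}


def zp (z : Fin n → Fin κ → F) (e : Fin n →₀ ℕ) : Fin κ → F :=
  fun j => ∏ i : Fin n, z i j ^ e i

lemma prod_X_pow {R : Type*} [CommSemiring R] (u : Fin n →₀ ℕ) :
    (∏ i : Fin n, (X i : MvPolynomial (Fin n) R) ^ u i) = monomial u 1 := by
  rw [monomial_eq, map_one, one_mul, Finsupp.prod]
  exact (Finset.prod_subset (subset_univ _)
    (fun i _ hi => by rw [Finsupp.notMem_support_iff.mp hi, pow_zero])).symm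

lemma coeff_pow (z : Fin n → Fin κ → F) (d : ℕ) (e : Fin n →₀ ℕ) :
    coeff e (((1 : MvPolynomial (Fin n) (Fin κ → F)) + ∑ i : Fin n, C (z i) * X i) ^ d) =
    if (e.sum fun _ m => m) ≤ d then
      ((Nat.multinomial (univ : Finset (Option (Fin n)))
        (fun o => o.elim (d - e.sum fun _ m => m) e) : F)) • zp z e
    else 0 := by
  classical
  set f : Option (Fin n) → MvPolynomial (Fin n) (Fin κ → F) :=
    fun o => o.elim 1 (fun i => C (z i) * X i) with hf
  have h1 : (1 : MvPolynomial (Fin n) (Fin κ → F)) + ∑ i : Fin n, C (z i) * X i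
      = ∑ o : Option (Fin n), f o := by
    rw [Fintype.sum_option]; rfl
  rw [h1, Finset.sum_pow_eq_sum_piAntidiag]
  have hterm : ∀ k : Option (Fin n) → ℕ,
      (Nat.multinomial univ k : MvPolynomial (Fin n) (Fin κ → F)) * ∏ o : Option (Fin n), f o ^ k o
      = C ((Nat.multinomial univ k : Fin κ → F) * ∏ i : Fin n, z i ^ k (some i)) *
          monomial (Finsupp.equivFunOnFinite.symm (fun i => k (some i))) 1 := by
    intro k
    rw [Fintype.prod_option]
    simp only [hf, Option.elim, one_pow, one_mul]
    have : ∀ i : Fin n, (C (z i) * X i) ^ k (some i)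
        = C (z i ^ k (some i)) * X i ^ k (some i) := by
      intro i; rw [mul_pow, ← C_pow]
    rw [Finset.prod_congr rfl (fun i _ => this i), Finset.prod_mul_distrib, ← map_prod]
    have hX : (∏ i : Fin n, (X i : MvPolynomial (Fin n) (Fin κ → F)) ^ k (some i))
        = monomial (Finsupp.equivFunOnFinite.symm (fun i => k (some i))) 1 := by
      rw [← prod_X_pow (Finsupp.equivFunOnFinite.symm (fun i => k (some i)))]
      rfl
    rw [hX, ← map_natCast (C : (Fin κ → F) →+* MvPolynomial (Fin n) (Fin κ → F)),
      ← mul_assoc, ← C_mul]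
  rw [Finset.sum_congr rfl (fun k _ => hterm k), coeff_sum]
  simp only [coeff_C_mul, coeff_monomial]
  have hesum : (e.sum fun _ m => m) = ∑ i : Fin n, e i :=
    Finsupp.sum_fintype e _ (fun _ => rfl)
  by_cases he : (e.sum fun _ m => m) ≤ d
  · rw [if_pos he]
    set k₀ : Option (Fin n) → ℕ := fun o => o.elim (d - e.sum fun _ m => m) e with hk₀
    have hk₀mem : k₀ ∈ piAntidiag (univ : Finset (Option (Fin n))) d := by
      rw [mem_piAntidiag]
      refine ⟨?_, fun _ _ => mem_univ _⟩
      rw [Fintype.sum_option]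
      simp only [hk₀, Option.elim]
      omega
    rw [Finset.sum_eq_single k₀]
    · have hcond : (Finsupp.equivFunOnFinite.symm fun i => k₀ (some i)) = e := by
        simp only [hk₀, Option.elim]
        exact Finsupp.equivFunOnFinite_symm_coe e
      rw [if_pos hcond, mul_one]
      funext j
      simp only [Pi.smul_apply, Pi.mul_apply, Pi.natCast_apply, smul_eq_mul, zp]
      rw [Finset.prod_apply]
      rfl
    · intro b hb hbne
      rw [mem_piAntidiag] at hb
      rw [if_neg, mul_zero]
      intro hcond
      apply hbne
      have hsome : ∀ i, b (some i) = e i := by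
        intro i
        have := congrArg (fun g => Finsupp.equivFunOnFinite g i) hcond
        simpa using this
      funext o
      match o with
      | some i => simpa [hk₀] using hsome i
      | none =>
        have := hb.1
        rw [Fintype.sum_option] at this
        have h2 : ∑ i : Fin n, b (some i) = ∑ i : Fin n, e i :=
          Finset.sum_congr rfl fun i _ => hsome i
        simp only [hk₀, Option.elim]
        omega
    · intro h
      exact absurd hk₀mem h
  · rw [if_neg he]
    apply Finset.sum_eq_zero
    intro b hb
    rw [mem_piAntidiag] at hb
    rw [if_neg, mul_zero]
    intro hcond
    apply he
    have hsome : ∀ i, b (some i) = e i := by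
      intro i
      have := congrArg (fun g => Finsupp.equivFunOnFinite g i) hcond
      simpa using this
    have := hb.1
    rw [Fintype.sum_option] at this
    have h2 : ∑ i : Fin n, b (some i) = ∑ i : Fin n, e i :=
      Finset.sum_congr rfl fun i _ => hsome i
    omega

lemma zp_add (z : Fin n → Fin κ → F) (a b : Fin n →₀ ℕ) :
    zp z (a + b) = zp z a * zp z b := by
  funext j
  simp [zp, pow_add, Finset.prod_mul_distrib]

lemma key (z : Fin n → Fin κ → F) (d : ℕ) :
    ∀ s : ℕ, ∀ e : Fin n →₀ ℕ, e.support.card ≤ s → (e.sum fun _ m => m) ≤ d →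
      zp z e ∈ Submodule.span F {v : Fin κ → F | ∃ e' : Fin n →₀ ℕ,
        e'.support.card ≤ Nat.log 2 κ ∧ (e'.sum fun _ m => m) ≤ d ∧ zp z e' = v} := by
  intro s
  induction s with
  | zero =>
    intro e hcard hsum
    exact Submodule.subset_span ⟨e, by omega, hsum, rfl⟩
  | succ s ih =>
    intro e hcard hsum
    by_cases hL : e.support.card ≤ Nat.log 2 κ
    · exact Submodule.subset_span ⟨e, hL, hsum, rfl⟩
    push_neg at hL
    classical
    have hκcard : κ < 2 ^ e.support.card :=
      lt_of_lt_of_le (Nat.lt_pow_succ_log_self one_lt_two κ)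
        (Nat.pow_le_pow_right (by norm_num) hL)
    set S := e.support with hS
    set v : ↥S.powerset → (Fin κ → F) :=
      fun T => zp z (e.filter (fun i => i ∈ (T : Finset (Fin n)))) with hv
    have hdep : ¬ LinearIndependent F v := by
      intro h
      have := h.fintype_card_le_finrank
      rw [Module.finrank_fin_fun, Fintype.card_coe, Finset.card_powerset] at this
      omega
    obtain ⟨g, hg0, T₁, hT₁⟩ := Fintype.not_linearIndependent_iff.mp hdep
    set 𝒯 : Finset ↥S.powerset := univ.filter fun T => g T ≠ 0 with h𝒯
    obtain ⟨T₀, hT₀mem, hT₀max⟩ :=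
      Finset.exists_max_image 𝒯 (fun T => ∑ i ∈ (T : Finset (Fin n)), e i)
        ⟨T₁, by simp [h𝒯, hT₁]⟩
    have hgT₀ : g T₀ ≠ 0 := by
      have := (Finset.mem_filter.mp hT₀mem).2
      exact this
    set m : Fin κ → F := zp z (e.filter (fun i => i ∉ (T₀ : Finset (Fin n)))) with hm
    set u : ↥S.powerset → (Fin n →₀ ℕ) :=
      fun T => e.filter (fun i => i ∈ (T : Finset (Fin n))) +
               e.filter (fun i => i ∉ (T₀ : Finset (Fin n))) with hu
    have hzpu : ∀ T : ↥S.powerset, zp z (u T) = v T * m := by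
      intro T
      rw [hu, zp_add]
    have huT₀ : u T₀ = e := by
      rw [hu]
      exact Finsupp.filter_pos_add_filter_neg _ _
    have hzero : ∑ T : ↥S.powerset, g T • zp z (u T) = 0 := by
      have h1 : ∀ T : ↥S.powerset, g T • zp z (u T) = (g T • v T) * m := by
        intro T; rw [hzpu, smul_mul_assoc]
      rw [Finset.sum_congr rfl (fun T _ => h1 T), ← Finset.sum_mul, hg0, zero_mul]
    have hsum𝒯 : ∑ T ∈ 𝒯, g T • zp z (u T) = 0 := by
      rw [← hzero]
      apply Finset.sum_subset (Finset.subset_univ 𝒯)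
      intro T _ hT
      have : g T = 0 := by
        by_contra hne
        exact hT (Finset.mem_filter.mpr ⟨mem_univ _, hne⟩)
      rw [this, zero_smul]
    have hkey : g T₀ • zp z e + ∑ T ∈ 𝒯.erase T₀, g T • zp z (u T) = 0 := by
      have h0 := hsum𝒯
      rw [← Finset.add_sum_erase 𝒯 (fun T => g T • zp z (u T)) hT₀mem, huT₀] at h0
      exact h0
    have hrepr : zp z e = (g T₀)⁻¹ • (∑ T ∈ 𝒯.erase T₀, (-(g T)) • zp z (u T)) := by
      have h7 : g T₀ • zp z e = ∑ T ∈ 𝒯.erase T₀, (-(g T)) • zp z (u T) := by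
        rw [eq_neg_of_add_eq_zero_left hkey, ← Finset.sum_neg_distrib]
        exact Finset.sum_congr rfl fun T _ => (neg_smul (g T) _).symm
      rw [← h7, inv_smul_smul₀ hgT₀]
    rw [hrepr]
    apply Submodule.smul_mem
    apply Submodule.sum_mem
    intro T hT
    apply Submodule.smul_mem
    -- facts about T
    obtain ⟨hTne, hT𝒯⟩ := Finset.mem_erase.mp hT
    have hgT : g T ≠ 0 := (Finset.mem_filter.mp hT𝒯).2
    have hw : ∑ i ∈ (T : Finset (Fin n)), e i ≤ ∑ i ∈ (T₀ : Finset (Fin n)), e i :=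
      hT₀max T hT𝒯
    have hTsub : (T : Finset (Fin n)) ⊆ S := Finset.mem_powerset.mp T.2
    have hT₀sub : (T₀ : Finset (Fin n)) ⊆ S := Finset.mem_powerset.mp T₀.2
    -- i₀ ∈ T₀ \ T
    obtain ⟨i₀, hi₀T₀, hi₀T⟩ : ∃ i₀, i₀ ∈ (T₀ : Finset (Fin n)) ∧ i₀ ∉ (T : Finset (Fin n)) := by
      by_contra hno
      push_neg at hno
      have hsub : (T₀ : Finset (Fin n)) ⊆ (T : Finset (Fin n)) := fun i hi => hno i hi
      have hne : (T₀ : Finset (Fin n)) ≠ (T : Finset (Fin n)) := by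
        intro hcontr
        exact hTne (Subtype.ext hcontr.symm)
      obtain ⟨i, hiT, hiT₀⟩ := Finset.exists_of_ssubset (ssubset_of_subset_of_ne hsub hne)
      have hpos : 0 < e i := Nat.pos_of_ne_zero (Finsupp.mem_support_iff.mp (hTsub hiT))
      have := Finset.sum_lt_sum_of_subset hsub hiT hiT₀ hpos (fun j _ _ => Nat.zero_le _)
      omega
    -- support bound
    have hsupp : (u T).support ⊆ S.erase i₀ := by
      intro i hi
      have h1 := Finsupp.support_add hi
      rw [Finsupp.support_filter, Finsupp.support_filter] at h1
      rw [Finset.mem_union, Finset.mem_filter, Finset.mem_filter] at h1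
      rw [Finset.mem_erase]
      rcases h1 with ⟨hiS, hiT'⟩ | ⟨hiS, hiT₀'⟩
      · exact ⟨fun hcontr => hi₀T (hcontr ▸ hiT'), hiS⟩
      · exact ⟨fun hcontr => hiT₀' (hcontr ▸ hi₀T₀), hiS⟩
    have hcardu : (u T).support.card ≤ s := by
      have h1 : ((u T).support).card ≤ (S.erase i₀).card := Finset.card_le_card hsupp
      rw [Finset.card_erase_of_mem (hT₀sub hi₀T₀)] at h1
      omega
    -- sum bound
    have hfs : ∀ (p : Fin n → Prop) [DecidablePred p],
        ((e.filter p).sum fun _ m => m) = ∑ i ∈ S.filter p, e i := by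
      intro p inst
      rw [Finsupp.sum, Finsupp.support_filter]
      refine Finset.sum_congr rfl fun i hi => ?_
      exact Finsupp.filter_apply_pos p e (Finset.mem_filter.mp hi).2
    have hsumu : ((u T).sum fun _ m => m) ≤ d := by
      have h1 : ((u T).sum fun _ m => m) =
          (∑ i ∈ S.filter (fun i => i ∈ (T : Finset (Fin n))), e i) +
          (∑ i ∈ S.filter (fun i => i ∉ (T₀ : Finset (Fin n))), e i) := by
        rw [hu, Finsupp.sum_add_index' (fun _ => rfl) (fun _ _ _ => rfl), hfs, hfs]
      have h2 : S.filter (fun i => i ∈ (T : Finset (Fin n))) = (T : Finset (Fin n)) := by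
        rw [Finset.filter_mem_eq_inter, Finset.inter_eq_right.mpr hTsub]
      have h3 : S.filter (fun i => i ∉ (T₀ : Finset (Fin n))) = S \ (T₀ : Finset (Fin n)) := by
        rw [Finset.filter_not, Finset.filter_mem_eq_inter, Finset.sdiff_inter_self_left]
      have h4 : (∑ i ∈ S \ (T₀ : Finset (Fin n)), e i) + ∑ i ∈ (T₀ : Finset (Fin n)), e i
          = ∑ i ∈ S, e i := Finset.sum_sdiff hT₀sub
      have h5 : (e.sum fun _ m => m) = ∑ i ∈ S, e i := rfl
      rw [h1, h2, h3]
      omega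
    exact ih (u T) hcardu hsumu


lemma multinomial_cast_ne_zero (d : ℕ) (hchar : ∀ p : ℕ, CharP F p → p = 0 ∨ d < p)
    (e : Fin n →₀ ℕ) (he : (e.sum fun _ m => m) ≤ d) :
    ((Nat.multinomial (univ : Finset (Option (Fin n)))
      (fun o => o.elim (d - e.sum fun _ m => m) e) : F)) ≠ 0 := by
  classical
  set M := Nat.multinomial (univ : Finset (Option (Fin n)))
      (fun o => o.elim (d - e.sum fun _ m => m) e) with hMdef
  have hdvd : M ∣ d ! := by
    have hspec := Nat.multinomial_spec (univ : Finset (Option (Fin n)))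
      (fun o => o.elim (d - e.sum fun _ m => m) e)
    have hsum : ∑ o : Option (Fin n),
        (fun o => o.elim (d - e.sum fun _ m => m) e) o = d := by
      rw [Fintype.sum_option]
      simp only [Option.elim]
      have : (e.sum fun _ m => m) = ∑ i : Fin n, e i := Finsupp.sum_fintype e _ fun _ => rfl
      omega
    rw [hsum] at hspec
    exact ⟨_, by rw [← hspec, mul_comm]⟩
  intro h0
  obtain ⟨p, hp⟩ := CharP.exists F
  haveI := hp
  rw [CharP.cast_eq_zero_iff F p] at h0
  rcases hchar p hp with rfl | hdp
  · rw [zero_dvd_iff] at h0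
    exact absurd h0 (Nat.multinomial_pos _ _).ne'
  · rcases CharP.char_is_prime_or_zero F p with hprime | rfl
    · have hpd : p ∣ d ! := h0.trans hdvd
      rw [Nat.Prime.dvd_factorial hprime] at hpd
      omega
    · rw [zero_dvd_iff] at h0
      exact absurd h0 (Nat.multinomial_pos _ _).ne'

end DiagConc

/-- **Diagonal circuits are `(⌊log₂ κ⌋ + 1)`-concentrated.**  Over a field of
characteristic zero or greater than `d`, for `D' = (1 + z₁x₁ + ⋯ + z_nx_n)^d` over the
Hadamard algebra `H_κ(F)` (with `1` the all-ones vector), every coefficient of `D'`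
lies in the `F`-span of the coefficients at exponents of support-weight `≤ ⌊log₂ κ⌋`. -/
theorem diagonal_concentration {F : Type*} [Field F] (κ n d : ℕ)
    (hκ : 1 ≤ κ) (hn : 1 ≤ n)
    (hchar : ∀ p : ℕ, CharP F p → p = 0 ∨ d < p)
    (z : Fin n → Fin κ → F) :
    ∀ e : Fin n →₀ ℕ,
      MvPolynomial.coeff e
          (((1 : MvPolynomial (Fin n) (Fin κ → F)) +
            ∑ i : Fin n, MvPolynomial.C (z i) * MvPolynomial.X i) ^ d) ∈
        Submodule.span F {v : Fin κ → F | ∃ e' : Fin n →₀ ℕ,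
          e'.support.card ≤ Nat.log 2 κ ∧
          MvPolynomial.coeff e'
            (((1 : MvPolynomial (Fin n) (Fin κ → F)) +
              ∑ i : Fin n, MvPolynomial.C (z i) * MvPolynomial.X i) ^ d) = v} := by
  intro e
  classical
  by_cases he : (e.sum fun _ m => m) ≤ d
  · rw [DiagConc.coeff_pow, if_pos he]
    apply Submodule.smul_mem
    have hk := DiagConc.key z d e.support.card e le_rfl he
    refine Submodule.span_le.mpr ?_ hk
    rintro v ⟨e', hcard', hsum', rfl⟩
    have hne := DiagConc.multinomial_cast_ne_zero (F := F) d hchar e' hsum'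
    have hco : MvPolynomial.coeff e'
        (((1 : MvPolynomial (Fin n) (Fin κ → F)) +
          ∑ i : Fin n, MvPolynomial.C (z i) * MvPolynomial.X i) ^ d)
        = ((Nat.multinomial (univ : Finset (Option (Fin n)))
            (fun o => o.elim (d - e'.sum fun _ m => m) e') : F)) • DiagConc.zp z e' := by
      rw [DiagConc.coeff_pow, if_pos hsum']
    have hzp : DiagConc.zp z e'
        = ((Nat.multinomial (univ : Finset (Option (Fin n)))
            (fun o => o.elim (d - e'.sum fun _ m => m) e') : F))⁻¹ •
          MvPolynomial.coeff e'
            (((1 : MvPolynomial (Fin n) (Fin κ → F)) +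
              ∑ i : Fin n, MvPolynomial.C (z i) * MvPolynomial.X i) ^ d) := by
      rw [hco, inv_smul_smul₀ hne]
    rw [hzp]
    exact Submodule.smul_mem _ _ (Submodule.subset_span ⟨e', hcard', rfl⟩)
  · rw [DiagConc.coeff_pow, if_neg he]
    exact zero_mem _
end

section
/- Let K be a field, κ ≥ 1, n ≥ 1, and ℓ' ≥ 1. For each i ∈ {1,…,n}, let g_i be a univariate polynomial in the variable x_i with coefficients in H_κ(K) whose constant coefficient is the all-ones vector 1. Let D := g₁ ⋆ ⋯ ⋆ g_n, a polynomial in x₁,…,x_n over H_κ(K). Suppose that for every subset X ⊆ {1,…,n} with |X| ≤ ℓ', the sub-product D_X := ∏_{i ∈ X} g_i is ℓ'-concentrated over H_κ(K). Then D is ℓ'-concentrated over H_κ(K). -/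
open MvPolynomial Finsupp

lemma prod_supp_subset {R : Type*} [CommSemiring R] {n : ℕ}
    (g : Fin n → MvPolynomial (Fin n) R) (X : Finset (Fin n))
    (hvars : ∀ i : Fin n, ∀ e ∈ (g i).support, e.support ⊆ {i}) :
    ∀ e ∈ (∏ i ∈ X, g i).support, e.support ⊆ X := by
  classical
  induction X using Finset.cons_induction with
  | empty =>
    intro e he
    simp only [Finset.prod_empty] at he
    have he' : MvPolynomial.coeff e (1 : MvPolynomial (Fin n) R) ≠ 0 :=
      MvPolynomial.mem_support_iff.1 he
    have : e = 0 := by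
      by_contra h
      rw [MvPolynomial.coeff_one, if_neg (fun hh => h hh.symm)] at he'
      exact he' rfl
    simp [this]
  | cons a s ha ih =>
    intro e he
    rw [Finset.prod_cons] at he
    have := MvPolynomial.support_mul _ _ he
    rw [Finset.mem_add] at this
    obtain ⟨u, hu, v, hv, rfl⟩ := this
    intro i hi
    rcases Finset.mem_union.1 (Finsupp.support_add hi) with h | h
    · exact Finset.mem_cons.2 (Or.inl (Finset.mem_singleton.1 (hvars a u hu h)))
    · exact Finset.mem_cons.2 (Or.inr (ih v hv h))

lemma coeff_mul_split {R : Type*} [CommSemiring R] {n : ℕ}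
    (P Q : MvPolynomial (Fin n) R) (X : Finset (Fin n))
    (hP : ∀ d ∈ P.support, d.support ⊆ X)
    (hQ : ∀ d ∈ Q.support, ∀ i ∈ d.support, i ∉ X)
    (e : Fin n →₀ ℕ) :
    MvPolynomial.coeff e (P * Q) =
      MvPolynomial.coeff (e.filter (· ∈ X)) P *
        MvPolynomial.coeff (e.filter (· ∉ X)) Q := by
  classical
  rw [MvPolynomial.coeff_mul]
  refine Finset.sum_eq_single (e.filter (· ∈ X), e.filter (· ∉ X)) ?_ ?_
  · rintro ⟨a, b⟩ hab hne
    have habe : a + b = e := Finset.HasAntidiagonal.mem_antidiagonal.1 hab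
    by_cases hca : MvPolynomial.coeff a P = 0
    · simp [hca]
    by_cases hcb : MvPolynomial.coeff b Q = 0
    · simp [hcb]
    exfalso
    have hsa : a.support ⊆ X := hP a (MvPolynomial.mem_support_iff.2 hca)
    have hsb : ∀ i ∈ b.support, i ∉ X := hQ b (MvPolynomial.mem_support_iff.2 hcb)
    apply hne
    have ha : a = e.filter (· ∈ X) := by
      ext i
      by_cases hi : i ∈ X
      · have hbi : b i = 0 := by
          by_contra h
          exact hsb i (Finsupp.mem_support_iff.2 h) hi
        rw [Finsupp.filter_apply_pos _ _ hi, ← habe, Finsupp.add_apply, hbi, add_zero]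
      · have hai : a i = 0 := by
          by_contra h
          exact hi (hsa (Finsupp.mem_support_iff.2 h))
        rw [Finsupp.filter_apply_neg _ _ hi, hai]
    have hb : b = e.filter (· ∉ X) := by
      ext i
      by_cases hi : i ∈ X
      · have hbi : b i = 0 := by
          by_contra h
          exact hsb i (Finsupp.mem_support_iff.2 h) hi
        rw [Finsupp.filter_apply_neg _ _ (by simpa using hi), hbi]
      · have hai : a i = 0 := by
          by_contra h
          exact hi (hsa (Finsupp.mem_support_iff.2 h))
        rw [Finsupp.filter_apply_pos _ _ (by simpa using hi), ← habe, Finsupp.add_apply, hai,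
          zero_add]
    rw [ha, hb]
  · intro h
    exact absurd (Finset.HasAntidiagonal.mem_antidiagonal.2 (Finsupp.filter_pos_add_filter_neg e (· ∈ X))) h

/-- **Key argument: concentration of products of univariates with unit constant term.**
Let `gᵢ` be a univariate polynomial in `xᵢ` over `H_κ(K)` whose constant coefficient is
the all-ones vector, and `D = g₁ ⋆ ⋯ ⋆ g_n`.  If every sub-product `D_X = ∏_{i ∈ X} gᵢ`
over a set `X` of at most `ℓ'` variables is `ℓ'`-concentrated, then so is `D`. -/
theorem product_concentration_from_subproducts {K : Type*} [Field K]
    (κ n ℓ' : ℕ) (hκ : 1 ≤ κ) (hn : 1 ≤ n) (hℓ' : 1 ≤ ℓ')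
    (g : Fin n → MvPolynomial (Fin n) (Fin κ → K))
    (hvars : ∀ i : Fin n, ∀ e ∈ (g i).support, e.support ⊆ {i})
    (hconst : ∀ i : Fin n, MvPolynomial.coeff 0 (g i) = 1)
    (hsub : ∀ X : Finset (Fin n), X.card ≤ ℓ' →
      ∀ e : Fin n →₀ ℕ,
        MvPolynomial.coeff e (∏ i ∈ X, g i) ∈
          Submodule.span K {v : Fin κ → K | ∃ e' : Fin n →₀ ℕ,
            e'.support.card < ℓ' ∧ MvPolynomial.coeff e' (∏ i ∈ X, g i) = v}) :
    ∀ e : Fin n →₀ ℕ,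
      MvPolynomial.coeff e (∏ i : Fin n, g i) ∈
        Submodule.span K {v : Fin κ → K | ∃ e' : Fin n →₀ ℕ,
          e'.support.card < ℓ' ∧ MvPolynomial.coeff e' (∏ i : Fin n, g i) = v} := by
  classical
  set T : Set (Fin κ → K) := {v : Fin κ → K | ∃ e' : Fin n →₀ ℕ,
    e'.support.card < ℓ' ∧ MvPolynomial.coeff e' (∏ i : Fin n, g i) = v} with hT
  suffices H : ∀ N : ℕ, ∀ e : Fin n →₀ ℕ, e.support.card ≤ N →
      MvPolynomial.coeff e (∏ i : Fin n, g i) ∈ Submodule.span K T by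
    intro e; exact H e.support.card e le_rfl
  intro N
  induction N using Nat.strong_induction_on with
  | _ N IH =>
    intro e he
    by_cases hcase : e.support.card < ℓ'
    · exact Submodule.subset_span ⟨e, hcase, rfl⟩
    push_neg at hcase
    obtain ⟨X, hXsub, hXcard⟩ := Finset.exists_subset_card_eq hcase
    -- split lemma specialized
    have hsplit : ∀ f : Fin n →₀ ℕ,
        MvPolynomial.coeff f (∏ i : Fin n, g i) =
          MvPolynomial.coeff (f.filter (· ∈ X)) (∏ i ∈ X, g i) *
            MvPolynomial.coeff (f.filter (· ∉ X)) (∏ i ∈ Xᶜ, g i) := by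
      intro f
      rw [← Finset.prod_mul_prod_compl X g]
      exact coeff_mul_split _ _ X (prod_supp_subset g X hvars)
        (fun d hd i hi => Finset.mem_compl.1 (prod_supp_subset g Xᶜ hvars d hd hi)) f
    set w : Fin κ → K := MvPolynomial.coeff (e.filter (· ∉ X)) (∏ i ∈ Xᶜ, g i) with hw
    have hmem := hsub X (le_of_eq hXcard) (e.filter (· ∈ X))
    have hmap : MvPolynomial.coeff e (∏ i : Fin n, g i) =
        (LinearMap.mulRight K w) (MvPolynomial.coeff (e.filter (· ∈ X)) (∏ i ∈ X, g i)) := by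
      rw [hsplit e]; rfl
    rw [hmap]
    have h2 : (LinearMap.mulRight K w) (MvPolynomial.coeff (e.filter (· ∈ X)) (∏ i ∈ X, g i)) ∈
        Submodule.map (LinearMap.mulRight K w) (Submodule.span K
          {v : Fin κ → K | ∃ e' : Fin n →₀ ℕ,
            e'.support.card < ℓ' ∧ MvPolynomial.coeff e' (∏ i ∈ X, g i) = v}) :=
      Submodule.mem_map_of_mem hmem
    rw [Submodule.map_span] at h2
    refine Submodule.span_le.2 ?_ h2
    rintro _ ⟨v, ⟨e', he'card, rfl⟩, rfl⟩
    simp only [LinearMap.mulRight_apply]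
    by_cases hsup : e'.support ⊆ X
    · -- build e'' := e' + e.filter (· ∉ X)
      set eC := e.filter (· ∉ X) with heC
      have hdisj : Disjoint e'.support eC.support := by
        rw [heC, Finsupp.support_filter]
        refine Finset.disjoint_left.2 fun i hi hi2 => ?_
        exact (Finset.mem_filter.1 hi2).2 (hsup hi)
      have hsupp'' : (e' + eC).support = e'.support ∪ eC.support :=
        Finsupp.support_add_eq hdisj
      have heCcard : eC.support.card = e.support.card - ℓ' := by
        rw [heC, Finsupp.support_filter]
        have : {x ∈ e.support | x ∉ X} = e.support \ X := by
          ext x; simp [Finset.mem_sdiff]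
        rw [this, Finset.card_sdiff_of_subset hXsub, hXcard]
      have hcard'' : (e' + eC).support.card < e.support.card := by
        have h1 : (e' + eC).support.card ≤ e'.support.card + eC.support.card := by
          rw [hsupp'']; exact Finset.card_union_le _ _
        omega
      have hfilter1 : (e' + eC).filter (· ∈ X) = e' := by
        ext i
        by_cases hi : i ∈ X
        · have : eC i = 0 := Finsupp.filter_apply_neg _ _ (by simp [hi])
          rw [Finsupp.filter_apply_pos _ _ hi, Finsupp.add_apply, this, add_zero]
        · have : e' i = 0 := by
            by_contra h
            exact hi (hsup (Finsupp.mem_support_iff.2 h))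
          rw [Finsupp.filter_apply_neg _ _ hi, this]
      have hfilter2 : (e' + eC).filter (· ∉ X) = eC := by
        ext i
        by_cases hi : i ∈ X
        · have h2 : eC i = 0 := Finsupp.filter_apply_neg _ _ (by simp [hi])
          rw [Finsupp.filter_apply_neg _ _ (by simpa using hi), h2]
        · have : e' i = 0 := by
            by_contra h
            exact hi (hsup (Finsupp.mem_support_iff.2 h))
          rw [Finsupp.filter_apply_pos _ _ (by simpa using hi), Finsupp.add_apply, this, zero_add]
      have : MvPolynomial.coeff e' (∏ i ∈ X, g i) * w =
          MvPolynomial.coeff (e' + eC) (∏ i : Fin n, g i) := by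
        rw [hsplit (e' + eC), hfilter1, hfilter2]
      rw [this]
      exact IH (e' + eC).support.card (lt_of_lt_of_le hcard'' he) (e' + eC) le_rfl
    · have : MvPolynomial.coeff e' (∏ i ∈ X, g i) = 0 := by
        by_contra h
        exact hsup (prod_supp_subset g X hvars e' (MvPolynomial.mem_support_iff.2 h))
      rw [this, zero_mul]
      exact Submodule.zero_mem _
end
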